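/- arXiv:1911.08016 — 5 statements merged into one kernel-verified Lean document; each statement's English description precedes it below -/
import Mathlib

section
/- Let p be a prime power, t ≥ 1, q = p^t, and suppose k ≤ q(1 − 1/p) = q − p^{t−1}. Then for every α* ∈ F_q, every η ∈ F_q, and every polynomial f ∈ F_q[x] of degree ≤ k − 1, one has the identity Tr(η f(α*)) = − Σ_{α ∈ F_q, α ≠ α*} Tr(η(α − α*)) · Tr( f(α)/(α − α*) ). Consequently, for the full-length Reed–Solomon code with evaluation set F_q, the value f(α*) is determined by the q − 1 subfield symbols Tr( f(α)/(α − α*) ) ∈ F_p for α ∈ F_q ∖ {α*}; i.e., any single node can be repaired from the other q − 1 nodes with repair bandwidth (q − 1) log p bits. -/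
open Polynomial Finset

/-- Guruswami–Wootters repair of the full-length Reed–Solomon code
(Proposition 4.1 of the paper). -/
theorem full_length_RS_repair
    (p t k : ℕ) (hp : IsPrimePow p) (ht : 1 ≤ t)
    (Fp Fq : Type) [Field Fp] [Field Fq] [Fintype Fp] [Fintype Fq] [DecidableEq Fq]
    [Algebra Fp Fq]
    (hcardp : Fintype.card Fp = p) (hcardq : Fintype.card Fq = p ^ t)
    (hk : k ≤ p ^ t - p ^ (t - 1)) :
    -- the repair identity
    (∀ (αstar η : Fq) (f : Polynomial Fq), f.degree < (k : WithBot ℕ) →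
      Algebra.trace Fp Fq (η * f.eval αstar) =
        - ∑ α ∈ Finset.univ.erase αstar,
            Algebra.trace Fp Fq (η * (α - αstar)) *
              Algebra.trace Fp Fq (f.eval α / (α - αstar))) ∧
    -- consequently, f(α*) is determined by the q-1 subfield symbols
    (∀ (αstar : Fq) (f f' : Polynomial Fq),
      f.degree < (k : WithBot ℕ) → f'.degree < (k : WithBot ℕ) →
      (∀ α : Fq, α ≠ αstar →
        Algebra.trace Fp Fq (f.eval α / (α - αstar)) =
        Algebra.trace Fp Fq (f'.eval α / (α - αstar))) →
      f.eval αstar = f'.eval αstar) := by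
  classical
  have hp2 : 2 ≤ p := hp.two_le
  -- characteristic
  obtain ⟨r, e, hr, he, hre⟩ := hp
  have hrp : r.Prime := hr.nat_prime
  haveI : Fact r.Prime := ⟨hrp⟩
  haveI hcharFp : CharP Fp r := by
    haveI := ringChar.charP Fp
    obtain ⟨n, hn, hcard⟩ := FiniteField.card Fp (ringChar Fp)
    have hr_eq : r = ringChar Fp := by
      have hdvd : r ∣ (ringChar Fp) ^ (n : ℕ) := by
        rw [← hcard, hcardp, ← hre]
        exact dvd_pow_self r (by omega)
      exact ((Nat.prime_dvd_prime_iff_eq hrp hn).mp (hrp.dvd_of_dvd_pow hdvd))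
    rw [hr_eq]; exact ringChar.charP Fp
  haveI : CharP Fq r := charP_of_injective_algebraMap' Fp (A := Fq) r
  haveI : ExpChar Fq r := .prime hrp
  -- finite dimensionality and rank
  haveI : FiniteDimensional Fp Fq := Module.finite_iff_finite.mpr inferInstance
  have hfr : Module.finrank Fp Fq = t := by
    have h := Module.card_eq_pow_finrank (K := Fp) (V := Fq)
    rw [hcardp, hcardq] at h
    exact (Nat.pow_right_injective hp2 h.symm)
  -- the p-power Frobenius as an Fp-algebra automorphism
  have hpowcard : ∀ a : Fp, a ^ p = a := fun a => by
    rw [← hcardp]; exact FiniteField.pow_card a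
  let F : Fq →ₐ[Fp] Fq :=
    { iterateFrobenius Fq r e with
      commutes' := fun a => by
        show iterateFrobenius Fq r e (algebraMap Fp Fq a) = algebraMap Fp Fq a
        rw [iterateFrobenius_def, hre, ← map_pow, hpowcard] }
  have hFinj : Function.Injective F := F.toRingHom.injective
  let φ : Fq ≃ₐ[Fp] Fq := AlgEquiv.ofBijective F (Finite.injective_iff_bijective.mp hFinj)
  have hφ : ∀ x : Fq, φ x = x ^ p := fun x => by
    show F x = x ^ p
    show iterateFrobenius Fq r e x = x ^ p
    rw [iterateFrobenius_def, hre]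
  have hφpow : ∀ (i : ℕ) (x : Fq), (φ ^ i) x = x ^ p ^ i := by
    intro i
    induction i with
    | zero => intro x; simp
    | succ n ih =>
      intro x
      rw [pow_succ, AlgEquiv.mul_apply, hφ, ih, ← pow_mul, pow_succ, mul_comm (p ^ n) p]
  -- the trace formula for finite fields
  have htrace : ∀ z : Fq,
      algebraMap Fp Fq (Algebra.trace Fp Fq z) = ∑ i ∈ range t, z ^ p ^ i := by
    intro z
    rw [trace_eq_sum_automorphisms]
    have hinj : Function.Injective (fun i : Fin t => φ ^ (i : ℕ)) := by
      intro i j hij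
      by_cases hij' : (i : ℕ) = (j : ℕ)
      · exact Fin.ext hij'
      · exfalso
        have hit : (i : ℕ) < t := i.isLt
        have hjt : (j : ℕ) < t := j.isLt
        have ht2 : 2 ≤ t := by omega
        obtain ⟨g, hg⟩ := IsCyclic.exists_generator (α := Fqˣ)
        have hord : orderOf g = p ^ t - 1 := by
          rw [orderOf_eq_card_of_forall_mem_zpowers hg, Nat.card_eq_fintype_card, Fintype.card_units, hcardq]
        have hgp : (g : Fq) ^ p ^ (i : ℕ) = (g : Fq) ^ p ^ (j : ℕ) := by
          have h := congrArg (fun σ : Fq ≃ₐ[Fp] Fq => σ (g : Fq)) hij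
          simpa [hφpow] using h
        have hgu : g ^ p ^ (i : ℕ) = g ^ p ^ (j : ℕ) := Units.ext (by push_cast; exact hgp)
        rw [pow_eq_pow_iff_modEq, hord] at hgu
        have hbound : ∀ m : ℕ, m < t → p ^ m < p ^ t - 1 := by
          intro m hm
          have h1 : p ^ m ≤ p ^ (t - 1) := Nat.pow_le_pow_right (by omega) (by omega)
          have h2 : 2 ≤ p ^ (t - 1) := le_trans hp2 (Nat.le_self_pow (by omega) p)
          have h3 : p ^ (t - 1) * 2 ≤ p ^ (t - 1) * p := Nat.mul_le_mul_left _ hp2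
          have h4 : p ^ (t - 1) * p = p ^ t := by
            rw [← pow_succ]; congr 1; omega
          omega
        have := hgu.eq_of_lt_of_lt (hbound _ hit) (hbound _ hjt)
        exact hij' (Nat.pow_right_injective hp2 this)
    have hbij : Function.Bijective (fun i : Fin t => φ ^ (i : ℕ)) := by
      rw [Fintype.bijective_iff_injective_and_card]
      exact ⟨hinj, by rw [Fintype.card_fin, ← Nat.card_eq_fintype_card, IsGalois.card_aut_eq_finrank, hfr]⟩
    have h1 : ∑ i : Fin t, z ^ p ^ (i : ℕ) = ∑ σ : Fq ≃ₐ[Fp] Fq, σ z :=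
      Fintype.sum_bijective _ hbij _ _ (fun i => (hφpow (i : ℕ) z).symm)
    rw [← h1, Fin.sum_univ_eq_sum_range (fun i => z ^ p ^ i)]
  -- sum of evaluations of a low-degree polynomial vanishes
  have hsum0 : ∀ h : Fq[X], h.degree < ((p ^ t - 1 : ℕ) : WithBot ℕ) →
      ∑ α : Fq, h.eval α = 0 := by
    intro h hd
    by_cases h0 : h = 0
    · simp [h0]
    · have hnd : h.natDegree < p ^ t - 1 := (natDegree_lt_iff_degree_lt h0).mpr hd
      calc ∑ α : Fq, h.eval α
          = ∑ α : Fq, ∑ i ∈ range (h.natDegree + 1), h.coeff i * α ^ i := by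
            simp_rw [eval_eq_sum_range]
        _ = ∑ i ∈ range (h.natDegree + 1), ∑ α : Fq, h.coeff i * α ^ i := Finset.sum_comm
        _ = 0 := Finset.sum_eq_zero fun i hi => by
            have hz : ∑ α : Fq, α ^ i = 0 :=
              FiniteField.sum_pow_lt_card_sub_one Fq i (by
                rw [hcardq]; have := mem_range.mp hi; omega)
            rw [← Finset.mul_sum, hz, mul_zero]
  have hpi1 : ∀ i : ℕ, p ^ i - 1 + 1 = p ^ i := fun i =>
    Nat.sub_add_cancel (Nat.one_le_pow _ _ (by omega))
  -- Part 1
  have part1 : ∀ (αstar η : Fq) (f : Polynomial Fq), f.degree < (k : WithBot ℕ) →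
      Algebra.trace Fp Fq (η * f.eval αstar) =
        - ∑ α ∈ Finset.univ.erase αstar,
            Algebra.trace Fp Fq (η * (α - αstar)) *
              Algebra.trace Fp Fq (f.eval α / (α - αstar)) := by
    intro αstar η f hf
    set g : Fq[X] := ∑ i ∈ range t, C (η ^ p ^ i) * (X - C αstar) ^ (p ^ i - 1) with hgdef
    have hA : ∀ α : Fq, (α - αstar) * g.eval α
        = ∑ i ∈ range t, (η * (α - αstar)) ^ p ^ i := by
      intro α
      rw [hgdef, eval_finset_sum, Finset.mul_sum]
      refine Finset.sum_congr rfl fun i _ => ?_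
      rw [eval_mul, eval_C, eval_pow, eval_sub, eval_X, eval_C, mul_pow]
      calc (α - αstar) * (η ^ p ^ i * (α - αstar) ^ (p ^ i - 1))
          = η ^ p ^ i * ((α - αstar) ^ (p ^ i - 1) * (α - αstar)) := by ring
        _ = η ^ p ^ i * (α - αstar) ^ p ^ i := by rw [← pow_succ, hpi1]
    have hB : g.eval αstar = η := by
      rw [hgdef, eval_finset_sum]
      rw [Finset.sum_eq_single_of_mem 0 (mem_range.mpr (by omega))]
      · simp
      · intro i _ hi0
        have h2 : 2 ≤ p ^ i := le_trans hp2 (Nat.le_self_pow hi0 p)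
        simp only [eval_mul, eval_pow, eval_sub, eval_X, eval_C, sub_self]
        rw [zero_pow (by omega : p ^ i - 1 ≠ 0), mul_zero]
    have hC : g.natDegree ≤ p ^ (t - 1) - 1 := by
      rw [hgdef]
      refine natDegree_sum_le_of_forall_le _ _ fun i hi => ?_
      refine le_trans (natDegree_C_mul_le _ _) ?_
      rw [natDegree_pow, natDegree_X_sub_C, mul_one]
      have h1 : p ^ i ≤ p ^ (t - 1) :=
        Nat.pow_le_pow_right (by omega) (by have := mem_range.mp hi; omega)
      omega
    have hsum : ∑ α : Fq, g.eval α * f.eval α = 0 := by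
      have h := hsum0 (g * f) ?_
      · simpa [eval_mul] using h
      · by_cases hgf : g * f = 0
        · rw [hgf, degree_zero]
          exact WithBot.bot_lt_coe _
        · have hgne : g ≠ 0 := left_ne_zero_of_mul hgf
          have hfne : f ≠ 0 := right_ne_zero_of_mul hgf
          rw [← natDegree_lt_iff_degree_lt hgf, natDegree_mul hgne hfne]
          have h1 : f.natDegree < k := (natDegree_lt_iff_degree_lt hfne).mpr hf
          have h2 : p ^ (t - 1) * p = p ^ t := by rw [← pow_succ]; congr 1; omega
          have h3 : 1 ≤ p ^ (t - 1) := Nat.one_le_pow _ _ (by omega)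
          have h4 : 2 * p ^ (t - 1) ≤ p ^ t := by nlinarith
          omega
    have key : ∀ α : Fq, α ≠ αstar →
        Algebra.trace Fp Fq (η * (α - αstar)) *
            Algebra.trace Fp Fq (f.eval α / (α - αstar))
          = Algebra.trace Fp Fq (g.eval α * f.eval α) := by
      intro α hα
      have hne : α - αstar ≠ 0 := sub_ne_zero.mpr hα
      have hgα : g.eval α = (∑ i ∈ range t, (η * (α - αstar)) ^ p ^ i) / (α - αstar) :=
        (eq_div_iff hne).mpr (by rw [mul_comm]; exact hA α)
      rw [hgα, ← htrace (η * (α - αstar)), div_mul_eq_mul_div, mul_div_assoc,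
        ← Algebra.smul_def, map_smul, smul_eq_mul]
    have hall : ∑ α : Fq, Algebra.trace Fp Fq (g.eval α * f.eval α) = 0 := by
      have h := congrArg (Algebra.trace Fp Fq) hsum
      rwa [map_sum, map_zero] at h
    have hsplit : Algebra.trace Fp Fq (g.eval αstar * f.eval αstar)
        + ∑ α ∈ Finset.univ.erase αstar,
            Algebra.trace Fp Fq (g.eval α * f.eval α) = 0 := by
      rw [← hall]
      exact Finset.add_sum_erase univ (fun α => Algebra.trace Fp Fq (g.eval α * f.eval α)) (mem_univ αstar)
    rw [hB] at hsplit
    have hrw : ∑ α ∈ Finset.univ.erase αstar,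
        Algebra.trace Fp Fq (η * (α - αstar)) *
          Algebra.trace Fp Fq (f.eval α / (α - αstar))
        = ∑ α ∈ Finset.univ.erase αstar,
            Algebra.trace Fp Fq (g.eval α * f.eval α) :=
      Finset.sum_congr rfl fun α hα => key α (Finset.ne_of_mem_erase hα)
    rw [hrw]
    exact eq_neg_of_add_eq_zero_left hsplit
  refine ⟨part1, ?_⟩
  -- Part 2
  intro αstar f f' hf hf' hsym
  have hx : ∀ η : Fq, Algebra.trace Fp Fq (η * (f.eval αstar - f'.eval αstar)) = 0 := by
    intro η
    have h1 := part1 αstar η f hf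
    have h2 := part1 αstar η f' hf'
    have h3 : ∑ α ∈ Finset.univ.erase αstar,
        Algebra.trace Fp Fq (η * (α - αstar)) *
          Algebra.trace Fp Fq (f.eval α / (α - αstar))
        = ∑ α ∈ Finset.univ.erase αstar,
            Algebra.trace Fp Fq (η * (α - αstar)) *
              Algebra.trace Fp Fq (f'.eval α / (α - αstar)) :=
      Finset.sum_congr rfl fun α hα => by
        rw [hsym α (Finset.ne_of_mem_erase hα)]
    have h4 : Algebra.trace Fp Fq (η * f.eval αstar)
        = Algebra.trace Fp Fq (η * f'.eval αstar) := by
      rw [h1, h2, h3]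
    have h5 : η * (f.eval αstar - f'.eval αstar)
        = η * f.eval αstar - η * f'.eval αstar := by ring
    rw [h5, map_sub, h4, sub_self]
  by_contra hne
  have hxne : f.eval αstar - f'.eval αstar ≠ 0 := sub_ne_zero.mpr hne
  refine hxne ((traceForm_nondegenerate Fp Fq).1 _ fun y => ?_)
  rw [Algebra.traceForm_apply, mul_comm]
  exact hx y
end

section
/- Let p be a prime power, t ≥ 1, q = p^t, and let α, η ∈ F_q. Then the linear factor (x − α) divides the polynomial Tr(η(x − α)) = Σ_{i=0}^{t−1} η^{p^i}(x − α)^{p^i} in F_q[x], and the quotient h(x) = Tr(η(x − α))/(x − α) satisfies: (i) deg h ≤ p^{t−1} − 1; (ii) h(α) = η; and (iii) for every γ ∈ F_q with γ ≠ α, the value h(γ) lies in the one-dimensional F_p-subspace (γ − α)^{−1} F_p, i.e., (γ − α) h(γ) ∈ F_p. -/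
open Polynomial Finset

lemma aux_mem_range_of_pow_eq (p : ℕ) (hp2 : 2 ≤ p)
    (Fp Fq : Type) [Field Fp] [Field Fq] [Fintype Fp] [Algebra Fp Fq]
    (hcardp : Fintype.card Fp = p) (z : Fq) (hz : z ^ p = z) :
    ∃ c : Fp, z = algebraMap Fp Fq c := by
  classical
  set f : Polynomial Fq := X ^ p - X with hf
  have hdeg : f.natDegree = p := by
    rw [hf, natDegree_sub_eq_left_of_natDegree_lt, natDegree_X_pow]
    rw [natDegree_X, natDegree_X_pow]; omega
  have hf0 : f ≠ 0 := by
    intro h0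
    rw [h0, natDegree_zero] at hdeg; omega
  set T : Finset Fq := Finset.univ.image (algebraMap Fp Fq) with hT
  have hTcard : T.card = p := by
    rw [hT, Finset.card_image_of_injective _ (algebraMap Fp Fq).injective,
      Finset.card_univ, hcardp]
  have hroot : ∀ x : Fq, x ^ p = x → x ∈ f.roots.toFinset := by
    intro x hx
    rw [Multiset.mem_toFinset, mem_roots hf0]
    simp [hf, IsRoot, hx]
  have hTsub : T ⊆ f.roots.toFinset := by
    intro x hx
    rw [hT, Finset.mem_image] at hx
    obtain ⟨c, _, rfl⟩ := hx
    apply hroot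
    rw [← map_pow]
    congr 1
    rw [← hcardp]
    exact FiniteField.pow_card c
  by_contra hcon
  push_neg at hcon
  have hzT : z ∉ T := by
    intro hzt
    rw [hT, Finset.mem_image] at hzt
    obtain ⟨c, _, rfl⟩ := hzt
    exact hcon c rfl
  have hsub : insert z T ⊆ f.roots.toFinset := by
    intro x hx
    rcases Finset.mem_insert.mp hx with hxz | hx
    · rw [hxz]; exact hroot z hz
    · exact hTsub hx
  have h1 : (insert z T).card ≤ p := by
    calc (insert z T).card ≤ f.roots.toFinset.card := Finset.card_le_card hsub
      _ ≤ Multiset.card f.roots := Multiset.toFinset_card_le _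
      _ ≤ f.natDegree := card_roots' f
      _ = p := hdeg
  rw [Finset.card_insert_of_notMem hzT, hTcard] at h1
  omega

/-- Properties of the Guruswami–Wootters repair polynomial
h(x) = Tr(η(x-α))/(x-α). -/
theorem trace_polynomial_quotient_properties
    (p t : ℕ) (hp : IsPrimePow p) (ht : 1 ≤ t)
    (Fp Fq : Type) [Field Fp] [Field Fq] [Fintype Fp] [Fintype Fq]
    [Algebra Fp Fq]
    (hcardp : Fintype.card Fp = p) (hcardq : Fintype.card Fq = p ^ t)
    (α η : Fq) :
    -- the "trace polynomial" Tr(η(x-α)) = Σ_{i<t} η^{p^i} (x-α)^{p^i}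
    let P : Polynomial Fq := ∑ i ∈ Finset.range t, C (η ^ p ^ i) * (X - C α) ^ p ^ i
    -- the quotient h = Tr(η(x-α))/(x-α)
    let h : Polynomial Fq := P /ₘ (X - C α)
    -- (x - α) divides the trace polynomial
    (X - C α) ∣ P ∧
    -- (i) deg h ≤ p^{t-1} - 1
    h.natDegree ≤ p ^ (t - 1) - 1 ∧
    -- (ii) h(α) = η
    h.eval α = η ∧
    -- (iii) for every γ ≠ α, (γ - α) h(γ) lies in F_p
    (∀ γ : Fq, γ ≠ α → ∃ c : Fp, (γ - α) * h.eval γ = algebraMap Fp Fq c) := by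
  intro P h
  have hp2 : 2 ≤ p := hp.two_le
  have hppos : 0 < p := by omega
  set H : Polynomial Fq := ∑ i ∈ Finset.range t, C (η ^ p ^ i) * (X - C α) ^ (p ^ i - 1) with hHdef
  have hPH : P = (X - C α) * H := by
    rw [hHdef, Finset.mul_sum]
    refine Finset.sum_congr rfl fun i _ => ?_
    have h1 : 1 ≤ p ^ i := Nat.one_le_pow _ _ hppos
    have hpow : (X - C α) ^ p ^ i = (X - C α) * (X - C α) ^ (p ^ i - 1) := by
      conv_lhs => rw [show p ^ i = (p ^ i - 1) + 1 by omega]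
      rw [pow_succ']
    rw [hpow]; ring
  have hh : h = H := by
    show P /ₘ (X - C α) = H
    rw [hPH, mul_divByMonic_cancel_left _ (monic_X_sub_C α)]
  refine ⟨⟨H, hPH⟩, ?_, ?_, ?_⟩
  · -- degree bound
    rw [hh, hHdef]
    apply natDegree_sum_le_of_forall_le
    intro i hi
    refine le_trans (natDegree_C_mul_le _ _) ?_
    refine le_trans (natDegree_pow_le) ?_
    rw [natDegree_X_sub_C, mul_one]
    have : p ^ i ≤ p ^ (t - 1) := Nat.pow_le_pow_right hppos (by
      have := Finset.mem_range.mp hi; omega)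
    omega
  · -- h(α) = η
    rw [hh, hHdef, eval_finset_sum]
    rw [Finset.sum_eq_single_of_mem 0 (Finset.mem_range.mpr (by omega))]
    · simp
    · intro i _ hi0
      have h1 : 1 ≤ p ^ i - 1 := by
        have : p ≤ p ^ i := Nat.le_self_pow hi0 p
        omega
      simp [zero_pow (by omega : p ^ i - 1 ≠ 0)]
  · -- (iii)
    intro γ hγ
    set y : Fq := η * (γ - α) with hy
    set z : Fq := ∑ i ∈ Finset.range t, y ^ p ^ i with hz
    have hval : (γ - α) * h.eval γ = z := by
      have : (γ - α) * h.eval γ = P.eval γ := by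
        rw [hPH, hh, eval_mul]
        simp [mul_comm]
      rw [this]
      show P.eval γ = z
      rw [hz, eval_finset_sum]
      refine Finset.sum_congr rfl fun i _ => ?_
      simp [hy, mul_pow]
    -- characteristic
    obtain ⟨r, k, hrpr, hkpos, hrk⟩ := hp
    have hrprime : Nat.Prime r := hrpr.nat_prime
    set c := ringChar Fq with hcdef
    haveI : CharP Fq c := ringChar.charP Fq
    obtain ⟨n, hcprime, hcard⟩ := FiniteField.card Fq c
    have hrc : r = c := by
      have h1 : r ^ (k * t) = c ^ (n : ℕ) := by
        rw [← hcard, hcardq, ← hrk, ← pow_mul]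
      have hdvd : r ∣ c ^ (n : ℕ) := by
        rw [← h1]
        exact dvd_pow_self r (by positivity)
      exact (Nat.prime_dvd_prime_iff_eq hrprime hcprime).mp
        (hrprime.dvd_of_dvd_pow hdvd)
    haveI : CharP Fq r := hrc ▸ ‹CharP Fq c›
    haveI : ExpChar Fq r := ExpChar.prime (hrc ▸ hcprime)
    have hfrob : ∀ x : Fq, (iterateFrobenius Fq r k) x = x ^ p := by
      intro x; rw [iterateFrobenius_def, hrk]
    have hzp : z ^ p = z := by
      rw [← hfrob z, hz, map_sum]
      have step : ∀ i, (iterateFrobenius Fq r k) (y ^ p ^ i) = y ^ p ^ (i + 1) := by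
        intro i
        rw [hfrob, ← pow_mul, ← pow_succ]
      simp only [step]
      have hyq : y ^ p ^ t = y := by rw [← hcardq]; exact FiniteField.pow_card y
      have : ∑ i ∈ Finset.range t, y ^ p ^ (i + 1)
          = (∑ i ∈ Finset.range t, y ^ p ^ i) + y ^ p ^ t - y ^ p ^ 0 := by
        rw [← Finset.sum_range_succ]
        rw [Finset.sum_range_succ' (fun i => y ^ p ^ i) t]
        ring
      rw [this, hyq]
      simp
    obtain ⟨cc, hcc⟩ := aux_mem_range_of_pow_eq p hp2 Fp Fq hcardp z hzp
    exact ⟨cc, by rw [hval, hcc]⟩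
end

section
/- Let q = 2^{2s}, let β be a primitive element of F_q, and let n ≤ 2(2^s − 1) be an even number. Let α_1,…,α_n be distinct elements of F_q with exactly n/2 of them in F_{2^s}^* and exactly n/2 of them in βF_{2^s}^*, and suppose k ≤ n − 2. Write Tr' = Tr_{F_q/F_{2^s}} for the relative trace and v_i = ∏_{m≠i}(α_i − α_m)^{−1}. Fix j ∈ [n]. If α_j ∈ F_{2^s}^*, then for every f ∈ F_q[x] of degree ≤ k−1, f(α_j) is determined by the F_{2^s}-symbols { Tr'(v_i f(α_i)), Tr'(v_i β^{−1}α_i f(α_i)) : i ≠ j, α_i ∈ F_{2^s}^* } together with { Tr'(v_i f(α_i)) : α_i ∈ βF_{2^s}^* }; if α_j ∈ βF_{2^s}^*, then f(α_j) is determined by { Tr'(v_i f(α_i)), Tr'(v_i α_i f(α_i)) : i ≠ j, α_i ∈ βF_{2^s}^* } together with { Tr'(v_i f(α_i)) : α_i ∈ F_{2^s}^* }. In either case the total number of downloaded F_{2^s}-symbols is 3n/2 − 2, i.e., the Reed–Solomon code admits a linear exact repair scheme with bandwidth s(3n/2 − 2) bits. -/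
open Polynomial Finset


lemma sum_v_eval {F : Type} [Field F] {n : ℕ} (α : Fin n → F)
    (hα : Function.Injective α) (h : Polynomial F)
    (hdeg : h.degree < ((n - 1 : ℕ) : WithBot ℕ)) :
    ∑ i : Fin n, (∏ m ∈ Finset.univ.erase i, (α i - α m)⁻¹) * h.eval (α i) = 0 := by
  classical
  have hinj : Set.InjOn α (Finset.univ : Finset (Fin n)) := fun a _ b _ hab => hα hab
  have hcard : #(Finset.univ : Finset (Fin n)) = n := by simp
  have h2 : h.degree < (#(Finset.univ : Finset (Fin n)) : WithBot ℕ) := by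
    rw [hcard]
    exact hdeg.trans_le (by exact_mod_cast Nat.sub_le n 1)
  have hint := Lagrange.eq_interpolate hinj h2
  have hco := congrArg (fun p : Polynomial F => p.coeff (n - 1)) hint
  simp only [Lagrange.interpolate_apply, Polynomial.finset_sum_coeff, coeff_C_mul] at hco
  have hbasis : ∀ i : Fin n, (Lagrange.basis Finset.univ α i).coeff (n - 1)
      = ∏ m ∈ Finset.univ.erase i, (α i - α m)⁻¹ := by
    intro i
    have heq : Lagrange.basis Finset.univ α i
        = Polynomial.C (∏ m ∈ Finset.univ.erase i, (α i - α m)⁻¹)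
          * ∏ m ∈ Finset.univ.erase i, (X - C (α m)) := by
      rw [Lagrange.basis]
      simp_rw [Lagrange.basisDivisor]
      rw [Finset.prod_mul_distrib, map_prod]
    rw [heq, coeff_C_mul]
    have hmon : (∏ m ∈ Finset.univ.erase i, (X - C (α m))).Monic :=
      monic_prod_of_monic _ _ fun m _ => monic_X_sub_C _
    have hdeg' : (∏ m ∈ Finset.univ.erase i, (X - C (α m))).natDegree = n - 1 := by
      rw [natDegree_prod_of_monic _ _ fun m _ => monic_X_sub_C _]
      simp [natDegree_X_sub_C, Finset.card_erase_of_mem]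
    rw [← hdeg', hmon.coeff_natDegree, mul_one]
  have hzero : h.coeff (n - 1) = 0 := Polynomial.coeff_eq_zero_of_degree_lt hdeg
  rw [hzero] at hco
  rw [show (0:F) = ∑ x : Fin n, eval (α x) h * (Lagrange.basis univ α x).coeff (n - 1) from hco]
  exact Finset.sum_congr rfl fun i _ => by rw [hbasis i, mul_comm]


lemma trace_pair_zero {E F : Type} [Field E] [Field F] [Fintype E] [Fintype F] [Algebra E F]
    {s : ℕ} (hs : 0 < s) (hcE : Fintype.card E = 2 ^ s) (hcF : Fintype.card F = 2 ^ (2 * s))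
    (c x : F) (hc : c ∉ Set.range (algebraMap E F))
    (h1 : Algebra.trace E F x = 0) (h2 : Algebra.trace E F (c * x) = 0) : x = 0 := by
  classical
  have hfin : Module.finrank E F = 2 := by
    have hpow : Fintype.card F = Fintype.card E ^ Module.finrank E F := Module.card_eq_pow_finrank
    rw [hcE, hcF] at hpow
    have heq : (2 ^ s) ^ 2 = (2 ^ s) ^ Module.finrank E F := by
      rw [← hpow, ← pow_mul, two_mul, Nat.mul_comm, two_mul]
    have h2s : 2 ≤ 2 ^ s := by
      calc 2 = 2 ^ 1 := rfl
      _ ≤ 2 ^ s := Nat.pow_le_pow_right (by norm_num) hs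
    exact (Nat.pow_right_injective h2s heq).symm
  have hli : LinearIndependent E ![1, c] := by
    rw [LinearIndependent.pair_iff]
    intro a b hab
    by_cases hb : b = 0
    · subst hb
      simp only [zero_smul, add_zero] at hab
      rw [← Algebra.algebraMap_eq_smul_one] at hab
      exact ⟨(algebraMap E F).injective (by rw [hab, map_zero]), rfl⟩
    · exfalso
      apply hc
      refine ⟨-(b⁻¹ * a), ?_⟩
      rw [Algebra.algebraMap_eq_smul_one]
      have hbc : b • c = -(a • (1 : F)) := eq_neg_of_add_eq_zero_right hab
      calc (-(b⁻¹ * a)) • (1 : F) = b⁻¹ • (-(a • (1 : F))) := by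
            rw [neg_smul, mul_smul, smul_neg]
      _ = b⁻¹ • (b • c) := by rw [hbc]
      _ = c := by rw [smul_smul, inv_mul_cancel₀ hb, one_smul]
  have hspan : Submodule.span E (Set.range ![1, c]) = ⊤ :=
    hli.span_eq_top_of_card_eq_finrank (by simp [hfin])
  have htr : Algebra.trace E F ≠ 0 := Algebra.trace_ne_zero E F
  by_contra hx
  obtain ⟨z, hz⟩ : ∃ z : F, Algebra.trace E F z ≠ 0 := by
    by_contra hno
    push_neg at hno
    exact htr (LinearMap.ext fun z => hno z)
  have hy : ∀ y : F, Algebra.trace E F (y * x) = 0 := by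
    intro y
    have hmem : y ∈ Submodule.span E (Set.range ![1, c]) := by rw [hspan]; trivial
    rw [show Set.range ![1, c] = {1, c} by
      rw [Set.pair_comm]; simp [Matrix.range_cons, Matrix.range_empty]] at hmem
    obtain ⟨a, b, hab⟩ := Submodule.mem_span_pair.mp hmem
    rw [← hab, add_mul, smul_mul_assoc, smul_mul_assoc, one_mul, map_add, map_smul, map_smul,
      h1, h2, smul_zero, smul_zero, add_zero]
  have hfinal := hy (z * x⁻¹)
  rw [mul_assoc, inv_mul_cancel₀ hx, mul_one] at hfinal
  exact hz hfinal


lemma beta_not_range {E F : Type} [Field E] [Field F] [Fintype E] [Fintype F] [Algebra E F]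
    {s : ℕ} (hs : 0 < s) (hcE : Fintype.card E = 2 ^ s)
    (β : F) (hβ : IsPrimitiveRoot β (2 ^ (2 * s) - 1)) :
    β ∉ Set.range (algebraMap E F) ∧ β⁻¹ ∉ Set.range (algebraMap E F) ∧ β ≠ 0 := by
  have h2s : 2 ≤ 2 ^ s := by
    calc 2 = 2 ^ 1 := rfl
    _ ≤ 2 ^ s := Nat.pow_le_pow_right (by norm_num) hs
  have hlt : 2 ^ s - 1 < 2 ^ (2 * s) - 1 := by
    have : 2 ^ s < 2 ^ (2 * s) := Nat.pow_lt_pow_right (by norm_num) (by omega)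
    omega
  have hβ0 : β ≠ 0 := by
    intro h0
    have := hβ.pow_eq_one
    rw [h0] at this
    have h22 : 2 ≤ 2 ^ (2 * s) := by
      calc 2 = 2 ^ 1 := rfl
      _ ≤ 2 ^ (2 * s) := Nat.pow_le_pow_right (by norm_num) (by omega)
    rw [zero_pow (by omega : 2 ^ (2 * s) - 1 ≠ 0)] at this
    exact zero_ne_one this
  have hmem : β ∉ Set.range (algebraMap E F) := by
    rintro ⟨y, hy⟩
    have hy0 : y ≠ 0 := fun h => hβ0 (by rw [← hy, h, map_zero])
    have : β ^ (2 ^ s - 1) = 1 := by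
      rw [← hy, ← map_pow]
      have hy1 : y ^ (2 ^ s - 1) = 1 := by
        rw [← hcE]; exact FiniteField.pow_card_sub_one_eq_one y hy0
      rw [hy1, map_one]
    exact hβ.pow_ne_one_of_pos_of_lt (by omega) hlt this
  refine ⟨hmem, ?_, hβ0⟩
  rintro ⟨y, hy⟩
  have hy0 : y ≠ 0 := by
    intro h
    rw [h, map_zero] at hy
    exact hβ0 (by rw [← inv_inv β, ← hy, inv_zero])
  exact hmem ⟨y⁻¹, by rw [map_inv₀, hy, inv_inv]⟩

lemma core {E F : Type} [Field E] [Field F] [Fintype E] [Fintype F] [Algebra E F]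
    {s n : ℕ} (hs : 0 < s) (hcE : Fintype.card E = 2 ^ s) (hcF : Fintype.card F = 2 ^ (2 * s))
    (hn2 : 2 ≤ n) (c u : F) (hc : c ∉ Set.range (algebraMap E F))
    (α : Fin n → F) (hα : Function.Injective α) (j : Fin n)
    (e : E) (he : e ≠ 0) (hαj : u * α j = c * algebraMap E F e)
    (g : Polynomial F) (hdeg : g.degree < ((n - 2 : ℕ) : WithBot ℕ))
    (v : Fin n → F) (hv : v = fun i => ∏ m ∈ Finset.univ.erase i, (α i - α m)⁻¹)
    (hTr0 : ∀ i : Fin n, i ≠ j → Algebra.trace E F (v i * g.eval (α i)) = 0)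
    (hTr1 : ∀ i : Fin n, i ≠ j →
      Algebra.trace E F (v i * (u * α i) * g.eval (α i)) = 0) :
    g.eval (α j) = 0 := by
  classical
  have hvj : v j ≠ 0 := by
    rw [hv]
    refine Finset.prod_ne_zero_iff.mpr fun m hm => ?_
    have : α j ≠ α m := fun hEq => (Finset.mem_erase.mp hm).1 (hα hEq).symm
    exact inv_ne_zero (sub_ne_zero.mpr this)
  have hd1 : g.degree < ((n - 1 : ℕ) : WithBot ℕ) :=
    hdeg.trans_le (by exact_mod_cast Nat.sub_le_sub_left (by norm_num) n)
  have S0 : ∑ i : Fin n, v i * g.eval (α i) = 0 := by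
    rw [hv]; exact sum_v_eval α hα g hd1
  have S1 : ∑ i : Fin n, v i * (u * α i) * g.eval (α i) = 0 := by
    have hdeg' : (C u * X * g).degree < ((n - 1 : ℕ) : WithBot ℕ) := by
      have h1 : (C u * X * g).degree ≤ 1 + g.degree := by
        refine (degree_mul_le _ _).trans (add_le_add_left ?_ _)
        exact (degree_mul_le _ _).trans (by simpa using add_le_add_left (degree_C_le) 1)
      have h2 : (1 : WithBot ℕ) + g.degree < 1 + ((n - 2 : ℕ) : WithBot ℕ) :=
        WithBot.add_lt_add_left (by simp) hdeg
      have h3 : (1 : WithBot ℕ) + ((n - 2 : ℕ) : WithBot ℕ) = ((n - 1 : ℕ) : WithBot ℕ) := by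
        rw [show (n - 1 : ℕ) = 1 + (n - 2) by omega, Nat.cast_add, Nat.cast_one]
      exact h1.trans_lt (h3 ▸ h2)
    have hsum := sum_v_eval α hα (C u * X * g) hdeg'
    rw [hv]
    rw [← hsum]
    refine Finset.sum_congr rfl fun i _ => ?_
    simp only [eval_mul, eval_C, eval_X]
    ring
  have T0 : Algebra.trace E F (v j * g.eval (α j)) = 0 := by
    have := congrArg (Algebra.trace E F) S0
    rw [map_sum, map_zero] at this
    rw [← Finset.add_sum_erase _ _ (Finset.mem_univ j)] at this
    rw [Finset.sum_eq_zero (fun i hi => hTr0 i (Finset.mem_erase.mp hi).1), add_zero] at this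
    exact this
  have T1 : Algebra.trace E F (v j * (u * α j) * g.eval (α j)) = 0 := by
    have := congrArg (Algebra.trace E F) S1
    rw [map_sum, map_zero] at this
    rw [← Finset.add_sum_erase _ _ (Finset.mem_univ j)] at this
    rw [Finset.sum_eq_zero (fun i hi => hTr1 i (Finset.mem_erase.mp hi).1), add_zero] at this
    exact this
  set x := v j * g.eval (α j) with hx
  have Tcx : Algebra.trace E F (c * x) = 0 := by
    have heq : v j * (u * α j) * g.eval (α j) = e • (c * x) := by
      rw [hαj, Algebra.smul_def, hx]; ring
    rw [heq, map_smul] at T1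
    have : e * Algebra.trace E F (c * x) = 0 := by rwa [smul_eq_mul] at T1
    rcases mul_eq_zero.mp this with h | h
    · exact absurd h he
    · exact h
  have hx0 : x = 0 := trace_pair_zero hs hcE hcF c x hc T0 Tcx
  rcases mul_eq_zero.mp (hx ▸ hx0) with h | h
  · exact absurd h hvj
  · exact h

/-- Repair of Reed–Solomon codes with evaluation points split between
F_{2^s}^* and βF_{2^s}^* (Proposition 4.2 of the paper). -/
theorem RS_repair_two_cosets
    (s n k : ℕ) (hs : 0 < s) (hneven : Even n) (hn : n ≤ 2 * (2 ^ s - 1)) (hn2 : 2 ≤ n)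
    (E F : Type) [Field E] [Field F] [Fintype E] [Fintype F] [DecidableEq F]
    [Algebra E F]
    (hcE : Fintype.card E = 2 ^ s) (hcF : Fintype.card F = 2 ^ (2 * s))
    (β : F) (hβ : IsPrimitiveRoot β (2 ^ (2 * s) - 1))
    (α : Fin n → F) (hα : Function.Injective α)
    -- each evaluation point lies in F_{2^s}^* or in βF_{2^s}^*
    (hpart : ∀ i : Fin n,
      (∃ e : E, e ≠ 0 ∧ α i = algebraMap E F e) ∨
      (∃ e : E, e ≠ 0 ∧ α i = β * algebraMap E F e))
    -- exactly n/2 points in each part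
    (hhalf1 : Nat.card {i : Fin n // ∃ e : E, e ≠ 0 ∧ α i = algebraMap E F e} = n / 2)
    (hhalf2 : Nat.card {i : Fin n // ∃ e : E, e ≠ 0 ∧ α i = β * algebraMap E F e} = n / 2)
    (hk : k ≤ n - 2) (j : Fin n) :
    -- the dual-code coefficients v_i
    let v : Fin n → F := fun i => ∏ m ∈ Finset.univ.erase i, (α i - α m)⁻¹
    -- Case α_j ∈ F_{2^s}^*
    ((∃ e : E, e ≠ 0 ∧ α j = algebraMap E F e) →
      ∀ f f' : Polynomial F,
        f.degree < (k : WithBot ℕ) → f'.degree < (k : WithBot ℕ) →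
        (∀ i : Fin n, i ≠ j → (∃ e : E, e ≠ 0 ∧ α i = algebraMap E F e) →
          Algebra.trace E F (v i * f.eval (α i)) =
            Algebra.trace E F (v i * f'.eval (α i)) ∧
          Algebra.trace E F (v i * (β⁻¹ * α i) * f.eval (α i)) =
            Algebra.trace E F (v i * (β⁻¹ * α i) * f'.eval (α i))) →
        (∀ i : Fin n, (∃ e : E, e ≠ 0 ∧ α i = β * algebraMap E F e) →
          Algebra.trace E F (v i * f.eval (α i)) =
            Algebra.trace E F (v i * f'.eval (α i))) →
        f.eval (α j) = f'.eval (α j)) ∧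
    -- Case α_j ∈ βF_{2^s}^*
    ((∃ e : E, e ≠ 0 ∧ α j = β * algebraMap E F e) →
      ∀ f f' : Polynomial F,
        f.degree < (k : WithBot ℕ) → f'.degree < (k : WithBot ℕ) →
        (∀ i : Fin n, i ≠ j → (∃ e : E, e ≠ 0 ∧ α i = β * algebraMap E F e) →
          Algebra.trace E F (v i * f.eval (α i)) =
            Algebra.trace E F (v i * f'.eval (α i)) ∧
          Algebra.trace E F (v i * α i * f.eval (α i)) =
            Algebra.trace E F (v i * α i * f'.eval (α i))) →
        (∀ i : Fin n, (∃ e : E, e ≠ 0 ∧ α i = algebraMap E F e) →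
          Algebra.trace E F (v i * f.eval (α i)) =
            Algebra.trace E F (v i * f'.eval (α i))) →
        f.eval (α j) = f'.eval (α j)) := by
  intro v
  have hv : v = fun i => ∏ m ∈ Finset.univ.erase i, (α i - α m)⁻¹ := rfl
  obtain ⟨hβR, hβiR, hβ0⟩ := beta_not_range hs hcE β hβ
  constructor
  · rintro ⟨ej, hej, hαj⟩ f f' hf hf' hA hB
    set g := f - f' with hg
    have hgdeg : g.degree < ((n - 2 : ℕ) : WithBot ℕ) := by
      have h1 : g.degree < (k : WithBot ℕ) :=
        lt_of_le_of_lt (degree_sub_le f f') (max_lt hf hf')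
      exact h1.trans_le (by exact_mod_cast hk)
    have hgev : ∀ y : F, g.eval y = f.eval y - f'.eval y := fun y => by
      rw [hg, eval_sub]
    have hTr0 : ∀ i : Fin n, i ≠ j → Algebra.trace E F (v i * g.eval (α i)) = 0 := by
      intro i hij
      rcases hpart i with h | h
      · rw [hgev, mul_sub, map_sub, (hA i hij h).1, sub_self]
      · rw [hgev, mul_sub, map_sub, hB i h, sub_self]
    have hTr1 : ∀ i : Fin n, i ≠ j →
        Algebra.trace E F (v i * (β⁻¹ * α i) * g.eval (α i)) = 0 := by
      intro i hij
      rcases hpart i with h | ⟨ei, hei, hαi⟩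
      · rw [hgev, mul_sub, map_sub, (hA i hij h).2, sub_self]
      · have hq : β⁻¹ * α i = algebraMap E F ei := by
          rw [hαi, ← mul_assoc, inv_mul_cancel₀ hβ0, one_mul]
        have h0 : Algebra.trace E F (v i * g.eval (α i)) = 0 := by
          rw [hgev, mul_sub, map_sub, hB i ⟨ei, hei, hαi⟩, sub_self]
        have heq : v i * (β⁻¹ * α i) * g.eval (α i) = ei • (v i * g.eval (α i)) := by
          rw [hq, Algebra.smul_def]; ring
        rw [heq, map_smul, h0, smul_zero]
    have hαj' : β⁻¹ * α j = β⁻¹ * algebraMap E F ej := by rw [hαj]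
    have hz := core hs hcE hcF hn2 β⁻¹ β⁻¹ hβiR α hα j ej hej hαj' g hgdeg v hv hTr0 hTr1
    have h0 : f.eval (α j) - f'.eval (α j) = 0 := by rw [← hgev]; exact hz
    exact sub_eq_zero.mp h0
  · rintro ⟨ej, hej, hαj⟩ f f' hf hf' hA hB
    set g := f - f' with hg
    have hgdeg : g.degree < ((n - 2 : ℕ) : WithBot ℕ) := by
      have h1 : g.degree < (k : WithBot ℕ) :=
        lt_of_le_of_lt (degree_sub_le f f') (max_lt hf hf')
      exact h1.trans_le (by exact_mod_cast hk)
    have hgev : ∀ y : F, g.eval y = f.eval y - f'.eval y := fun y => by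
      rw [hg, eval_sub]
    have hTr0 : ∀ i : Fin n, i ≠ j → Algebra.trace E F (v i * g.eval (α i)) = 0 := by
      intro i hij
      rcases hpart i with h | h
      · rw [hgev, mul_sub, map_sub, hB i h, sub_self]
      · rw [hgev, mul_sub, map_sub, (hA i hij h).1, sub_self]
    have hTr1 : ∀ i : Fin n, i ≠ j →
        Algebra.trace E F (v i * (1 * α i) * g.eval (α i)) = 0 := by
      intro i hij
      rw [one_mul]
      rcases hpart i with ⟨ei, hei, hαi⟩ | h
      · have h0 : Algebra.trace E F (v i * g.eval (α i)) = 0 := by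
          rw [hgev, mul_sub, map_sub, hB i ⟨ei, hei, hαi⟩, sub_self]
        have heq : v i * α i * g.eval (α i) = ei • (v i * g.eval (α i)) := by
          rw [hαi, Algebra.smul_def]; ring
        rw [heq, map_smul, h0, smul_zero]
      · rw [hgev, mul_sub, map_sub, (hA i hij h).2, sub_self]
    have hαj' : 1 * α j = β * algebraMap E F ej := by rw [one_mul, hαj]
    have hz := core hs hcE hcF hn2 β 1 hβR α hα j ej hej hαj' g hgdeg v hv hTr0 hTr1
    have h0 : f.eval (α j) - f'.eval (α j) = 0 := by rw [← hgev]; exact hz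
    exact sub_eq_zero.mp h0
end

section
/- Let n > d > k be positive integers, let p be a prime power, and set s = d − k + 1. Then there exist distinct primes ℓ_1,…,ℓ_n with ℓ_i ≡ 1 (mod s), elements α_1,…,α_n in an algebraic closure of F_p with [F_p(α_i) : F_p] = ℓ_i, fields F = F_p(α_1,…,α_n), F_j = F_p(α_i : i ≠ j), and an extension field K of F with [K : F] = s, such that the Reed–Solomon code over K of dimension k with the distinct evaluation points α_1,…,α_n admits the following repair property: for every j ∈ [n] there exist an F_j-subspace S_j ⊆ K with dim_{F_j} S_j = ℓ_j and S_j + S_j α_j + … + S_j α_j^{s−1} = K, with F_j-basis β_1,…,β_{ℓ_j} of S_j, such that for every subset S ⊆ [n]∖{j} with |S| = d and v_i = ∏_{i'∈{j}∪S, i'≠i}(α_i − α_{i'})^{−1}, every f ∈ K[x] of degree ≤ k−1 has f(α_j) determined by the d·ℓ_j symbols Tr_{K/F_j}(β_m v_i f(α_i)) ∈ F_j for i ∈ S and m ∈ [ℓ_j]. Moreover the corresponding bandwidth d·ℓ_j·log|F_j| equals the cut-set bound d·log|K|/(d − k + 1), since [K : F_j] = sℓ_j. -/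
open Polynomial Finset

namespace RSAux

/-- If `r^a - 1 ∣ r^b - 1` then `a ∣ b` (for `2 ≤ r`, `0 < a`). -/
theorem dvd_of_pow_sub_one_dvd {r a b : ℕ} (hr : 2 ≤ r) (ha : 0 < a)
    (h : r ^ a - 1 ∣ r ^ b - 1) : a ∣ b := by
  have hZ : ((r : ℤ) ^ a - 1) ∣ ((r : ℤ) ^ b - 1) := by
    have := Int.natCast_dvd_natCast.mpr h
    have h1a : (1 : ℕ) ≤ r ^ a := Nat.one_le_pow _ _ (by omega)
    have h1b : (1 : ℕ) ≤ r ^ b := Nat.one_le_pow _ _ (by omega)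
    push_cast [Nat.cast_sub h1a, Nat.cast_sub h1b] at this
    exact_mod_cast this
  set u := b % a with hu
  have hub : b = a * (b / a) + u := (Nat.div_add_mod b a).symm
  have hslt : u < a := Nat.mod_lt _ ha
  have hdvd2 : ((r : ℤ) ^ a - 1) ∣ ((r : ℤ) ^ (a * (b / a)) - 1) := by
    have := sub_dvd_pow_sub_pow ((r : ℤ) ^ a) 1 (b / a)
    simpa [← pow_mul] using this
  have key : ((r : ℤ) ^ a - 1) ∣ ((r : ℤ) ^ u - 1) := by
    have hb : (r : ℤ) ^ b - 1 = (((r:ℤ) ^ (a * (b/a)) - 1) * (r:ℤ) ^ u) + ((r:ℤ) ^ u - 1) := by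
      have hbe : (r:ℤ) ^ b = (r:ℤ) ^ (a * (b/a)) * (r:ℤ) ^ u := by
        rw [← pow_add, ← hub]
      rw [hbe]; ring
    have := dvd_sub hZ (hdvd2.mul_right ((r:ℤ) ^ u))
    rw [hb] at this
    simpa using this
  have hlt : (r : ℤ) ^ u - 1 < (r : ℤ) ^ a - 1 := by
    have : (r : ℤ) ^ u < (r : ℤ) ^ a :=
      pow_lt_pow_right₀ (by exact_mod_cast hr) hslt
    omega
  have hge : (0 : ℤ) ≤ (r : ℤ) ^ u - 1 := by
    have : (1 : ℤ) ≤ (r : ℤ) ^ u := one_le_pow₀ (by exact_mod_cast (by omega : 1 ≤ r))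
    omega
  have hzero : (r : ℤ) ^ u - 1 = 0 := by
    rcases key with ⟨c, hc⟩
    have hpos : (0 : ℤ) < (r : ℤ) ^ a - 1 := by
      have : (2 : ℤ) ≤ (r : ℤ) ^ a := by
        calc (2:ℤ) ≤ (r:ℤ) := by exact_mod_cast hr
        _ ≤ (r:ℤ) ^ a := le_self_pow₀ (by exact_mod_cast (by omega : 1 ≤ r)) (by omega)
      omega
    rcases lt_trichotomy c 0 with hc0 | hc0 | hc0
    · nlinarith
    · simp [hc, hc0]
    · nlinarith
  have : u = 0 := by
    have : (r : ℤ) ^ u = 1 := by omega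
    by_contra hu0
    have : (r : ℤ) ^ u ≥ (r : ℤ) ^ 1 := pow_le_pow_right₀ (by exact_mod_cast (by omega : 1 ≤ r)) (by omega)
    simp at this
    omega
  exact Nat.dvd_of_mod_eq_zero (by omega)

variable {K : Type*} [Field K]

/-- The fixed subfield of `x ↦ x^q`. -/
def fixedSubfield (K : Type*) [Field K] (q : ℕ) (hq : q ≠ 0)
    (hadd : ∀ x y : K, (x + y) ^ q = x ^ q + y ^ q) : Subfield K where
  carrier := {x : K | x ^ q = x}
  mul_mem' := by
    intro a b ha hb
    simp only [Set.mem_setOf_eq] at *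
    rw [mul_pow, ha, hb]
  one_mem' := by simp
  add_mem' := by
    intro a b ha hb
    simp only [Set.mem_setOf_eq] at *
    rw [hadd, ha, hb]
  zero_mem' := by simp [zero_pow hq]
  neg_mem' := by
    intro a ha
    simp only [Set.mem_setOf_eq] at *
    have h2 : (0 : K) = a ^ q + (-a) ^ q := by rw [← hadd]; simp [zero_pow hq]
    rw [ha] at h2
    linear_combination -h2
  inv_mem' := by
    intro a ha
    simp only [Set.mem_setOf_eq] at *
    rw [inv_pow, ha]

theorem mem_fixedSubfield {q : ℕ} {hq : q ≠ 0} {hadd : ∀ x y : K, (x + y) ^ q = x ^ q + y ^ q}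
    {x : K} : x ∈ fixedSubfield K q hq hadd ↔ x ^ q = x := Iff.rfl


theorem card_fixed {K : Type*} [Field K] [Fintype K] (r : ℕ) [hrF : Fact r.Prime] [CharP K r]
    {a N : ℕ} (ha : a ≠ 0) (hdvd : a ∣ N) (hN : Fintype.card K = r ^ N) :
    Nat.card {x : K // x ^ r ^ a = x} = r ^ a := by
  have hr1 : 1 < r := hrF.out.one_lt
  have h1 : 1 < r ^ a := Nat.one_lt_pow ha hr1
  set f : K[X] := X ^ r ^ a - X with hf
  have hf0 : f ≠ 0 := FiniteField.X_pow_card_sub_X_ne_zero K h1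
  have hsep : f.Separable := galois_poly_separable r (r ^ a) (dvd_pow_self r ha)
  have hbig0 : (X ^ Fintype.card K - X : K[X]) ≠ 0 :=
    FiniteField.X_pow_card_sub_X_ne_zero K Fintype.one_lt_card
  have hbigsp : Splits (X ^ Fintype.card K - X : K[X]) := by
    rw [Polynomial.splits_iff_card_roots, FiniteField.roots_X_pow_card_sub_X,
      FiniteField.X_pow_card_sub_X_natDegree_eq K Fintype.one_lt_card]
    exact Finset.card_univ (α := K)
  have hdvdpoly : f ∣ (X ^ Fintype.card K - X : K[X]) := by
    rw [hN]
    obtain ⟨t, rfl⟩ := hdvd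
    have e1 : (X ^ r ^ a - X : K[X]) = X * (X ^ (r ^ a - 1) - 1) := by
      rw [mul_sub, mul_one, ← pow_succ', Nat.sub_add_cancel h1.le]
    have e2 : (X ^ r ^ (a * t) - X : K[X]) = X * (X ^ (r ^ (a * t) - 1) - 1) := by
      rw [mul_sub, mul_one, ← pow_succ',
        Nat.sub_add_cancel (Nat.one_le_pow _ _ (by omega))]
    rw [hf, e1, e2]
    refine mul_dvd_mul_left _ ?_
    obtain ⟨w, hw⟩ : r ^ a - 1 ∣ r ^ (a * t) - 1 := by
      have := Nat.sub_dvd_pow_sub_pow (r ^ a) 1 t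
      simpa [← pow_mul] using this
    rw [hw]
    have := sub_dvd_pow_sub_pow ((X : K[X]) ^ (r ^ a - 1)) 1 w
    simpa [← pow_mul] using this
  have hsp : Splits f := hbigsp.of_dvd hbig0 hdvdpoly
  have hcard : Fintype.card (f.rootSet K) = r ^ a := by
    have hmap : Splits (f.map (algebraMap K K)) := by rwa [Algebra.algebraMap_self, Polynomial.map_id]
    rw [Polynomial.card_rootSet_eq_natDegree hsep hmap,
      FiniteField.X_pow_card_sub_X_natDegree_eq K h1]
  have hsetiff : ∀ x : K, (x ^ r ^ a = x) ↔ x ∈ f.rootSet K := by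
    intro x
    rw [Polynomial.mem_rootSet, and_iff_right hf0]
    simp only [hf, map_sub, aeval_X_pow, aeval_X, sub_eq_zero, ne_eq, hf0,
      not_false_eq_true, true_and]
  rw [Nat.card_congr (Equiv.subtypeEquivRight hsetiff), Nat.card_eq_fintype_card, hcard]

theorem exists_gen [Fintype K] (T : Subfield K) :
    ∃ x : K, x ∈ T ∧ x ≠ 0 ∧ orderOf x = Nat.card ↥T - 1 ∧
      ∀ y ∈ T, y ≠ 0 → ∃ c : ℕ, x ^ c = y := by
  haveI : Fintype ↥T := Fintype.ofFinite _
  haveI : Fintype (↥T)ˣ := Fintype.ofFinite _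
  obtain ⟨g, hg⟩ := IsCyclic.exists_generator (α := (↥T)ˣ)
  refine ⟨((g : ↥T) : K), (g : ↥T).2, ?_, ?_, ?_⟩
  · have := Units.ne_zero g
    simpa [Subtype.ext_iff] using this
  · have h1 : orderOf ((g : ↥T) : K) = orderOf (g : ↥T) :=
      orderOf_injective T.subtype.toMonoidHom Subtype.val_injective _
    have h2 : orderOf (g : ↥T) = orderOf g := orderOf_units
    have h3 : orderOf g = Nat.card (↥T)ˣ := orderOf_eq_card_of_forall_mem_zpowers hg
    rw [h1, h2, h3, Nat.card_units]
  · intro y hy hy0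
    have hy0' : (⟨y, hy⟩ : ↥T) ≠ 0 := by simp [Subtype.ext_iff, hy0]
    set u : (↥T)ˣ := Units.mk0 _ hy0' with hu
    obtain ⟨c, hc⟩ := mem_powers_iff_mem_zpowers.mpr (hg u)
    refine ⟨c, ?_⟩
    have hc' : g ^ c = u := hc
    have e1 : ((g ^ c : (↥T)ˣ) : ↥T) = (g : ↥T) ^ c := Units.val_pow_eq_pow_val g c
    have e2 : (((g ^ c : (↥T)ˣ) : ↥T) : K) = y := by rw [hc', hu]; rfl
    rw [← e2, e1]
    push_cast
    rfl

theorem dvd_of_fixed {r a v : ℕ} (hr : 2 ≤ r) (ha : 0 < a) {x : K}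
    (hx0 : x ≠ 0) (hord : orderOf x = r ^ a - 1) (hfix : x ^ r ^ v = x) : a ∣ v := by
  have hrv : 1 ≤ r ^ v := Nat.one_le_pow _ _ (by omega)
  have h1 : x ^ (r ^ v - 1) = 1 := by
    have hmul : x ^ (r ^ v - 1) * x = 1 * x := by
      rw [← pow_succ, Nat.sub_add_cancel hrv, hfix, one_mul]
    exact mul_right_cancel₀ hx0 hmul
  have h2 : orderOf x ∣ r ^ v - 1 := orderOf_dvd_of_pow_eq_one h1
  rw [hord] at h2
  exact dvd_of_pow_sub_one_dvd hr ha h2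

theorem lagrange_vanish {F : Type*} [Field F] {ι : Type*} [DecidableEq ι] (T : Finset ι)
    (v : ι → F) (hv : Set.InjOn v T) (h : F[X]) (hd : h.degree < ((T.card - 1 : ℕ) : WithBot ℕ)) :
    ∑ i ∈ T, (∏ i' ∈ T.erase i, (v i - v i')⁻¹) * h.eval (v i) = 0 := by
  have hd' : h.degree < T.card := lt_of_lt_of_le hd (by exact_mod_cast Nat.sub_le _ _)
  have hinterp := Lagrange.eq_interpolate hv hd'
  set D := T.card - 1 with hD
  have hcoeff : h.coeff D = 0 := coeff_eq_zero_of_degree_lt hd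
  have hco : (Lagrange.interpolate T v fun i => h.eval (v i)).coeff D =
      ∑ i ∈ T, (∏ i' ∈ T.erase i, (v i - v i')⁻¹) * h.eval (v i) := by
    rw [Lagrange.interpolate_apply, finset_sum_coeff]
    refine Finset.sum_congr rfl fun i hi => ?_
    rw [coeff_C_mul]
    rw [mul_comm]
    congr 1
    have hnd : (Lagrange.basis T v i).natDegree = D := Lagrange.natDegree_basis hv hi
    rw [← hnd, coeff_natDegree]
    show (Lagrange.basis T v i).leadingCoeff = _
    rw [Lagrange.basis, leadingCoeff_prod]
    refine Finset.prod_congr rfl fun j hj => ?_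
    rw [Lagrange.basisDivisor, leadingCoeff_mul, leadingCoeff_C,
      (monic_X_sub_C (v j)).leadingCoeff, mul_one]
  rw [← hco, ← hinterp, hcoeff]


section Core

variable {E K : Type*} [Field E] [Field K] [Algebra E K]

set_option maxHeartbeats 2000000 in
set_option synthInstance.maxHeartbeats 1000000 in
theorem core [Finite K] (Fj : IntermediateField E K) (q s ℓ : ℕ)
    (hq1 : 1 < q) (hs : 0 < s) (hsℓ : s < ℓ)
    (hadd : ∀ x y : K, (x + y) ^ q = x ^ q + y ^ q)
    (hFq : ∀ x : K, x ∈ Fj ↔ x ^ q = x)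
    (hcardFj : Nat.card ↥Fj = q)
    (hrank : Module.finrank ↥Fj K = s * ℓ)
    (hVcard : Nat.card {x : K // x ^ q ^ ℓ = x} = q ^ ℓ)
    (αj : K) (hαj : αj ^ q ^ ℓ = αj)
    (hαjny : ∀ v, 0 < v → v < ℓ → αj ^ q ^ v ≠ αj) :
    ∃ (Sj : Submodule ↥Fj K) (b : Module.Basis (Fin ℓ) ↥Fj ↥Sj),
      Module.finrank ↥Fj ↥Sj = ℓ ∧
      (∀ x : K, ∃ g : Fin s → K, (∀ c, g c ∈ Sj) ∧
        x = ∑ c : Fin s, g c * αj ^ (c : ℕ)) := by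
  classical
  have hq0 : q ≠ 0 := by omega
  have hℓ0 : 0 < ℓ := lt_trans hs hsℓ
  haveI : Fintype K := Fintype.ofFinite _
  haveI : Fintype ↥Fj := Fintype.ofFinite _
  haveI : Module.Finite ↥Fj K := Module.Finite.of_finite
  -- iterated q-power is additive
  have haddc : ∀ (c : ℕ) (x y : K), (x + y) ^ q ^ c = x ^ q ^ c + y ^ q ^ c := by
    intro c
    induction c with
    | zero => intro x y; simp
    | succ c ih =>
      intro x y
      rw [pow_succ, pow_mul, pow_mul, pow_mul, ih, hadd]
  have hpowpow : ∀ (x : K) (c c' : ℕ), (x ^ q ^ c) ^ q ^ c' = x ^ q ^ (c + c') := by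
    intro x c c'; rw [← pow_mul, ← pow_add]
  have hFfix : ∀ x ∈ Fj, ∀ c, x ^ q ^ c = x := by
    intro x hx c
    induction c with
    | zero => simp
    | succ c ih => rw [pow_succ, pow_mul, ih, (hFq x).mp hx]
  have hsmulFj : ∀ (c : ↥Fj) (x : K), c • x = (c : K) * x := fun c x => rfl
  -- the subfield of elements fixed by x ↦ x^(q^ℓ)
  let Fsub : Subfield K := fixedSubfield K (q ^ ℓ) (pow_ne_zero _ hq0) (haddc ℓ)
  have hmemFsub : ∀ x : K, x ∈ Fsub ↔ x ^ q ^ ℓ = x := fun _ => Iff.rfl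
  have hpowmem : ∀ (x : K), x ^ q ^ ℓ = x → ∀ t, (x ^ q ^ t) ∈ Fsub := by
    intro x hx t
    have h1 : (x ^ q ^ t) ^ q ^ ℓ = x ^ q ^ (t + ℓ) := hpowpow x t ℓ
    have h2 : (x ^ q ^ ℓ) ^ q ^ t = x ^ q ^ (ℓ + t) := hpowpow x ℓ t
    rw [hmemFsub, h1, add_comm t ℓ, ← h2, hx]
  have hαmem : αj ∈ Fsub := hαj
  -- V : the same set as an Fj-submodule of K
  let V : Submodule ↥Fj K :=
    { carrier := {x : K | x ^ q ^ ℓ = x}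
      add_mem' := by
        intro a b ha hb
        simp only [Set.mem_setOf_eq] at *
        rw [haddc ℓ, ha, hb]
      zero_mem' := by simp [zero_pow (pow_ne_zero ℓ hq0)]
      smul_mem' := by
        intro c x hx
        simp only [Set.mem_setOf_eq] at *
        rw [hsmulFj, mul_pow, hx, hFfix (c : K) c.2 ℓ] }
  have hmemV : ∀ x : K, x ∈ V ↔ x ^ q ^ ℓ = x := fun _ => Iff.rfl
  have hVc : Nat.card ↥V = q ^ ℓ := hVcard
  have hFsubc : Nat.card ↥Fsub = q ^ ℓ := hVcard
  -- cardinality of K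
  have hcardK : Nat.card K = q ^ (s * ℓ) := by
    have h1 : Fintype.card K = Fintype.card ↥Fj ^ Module.finrank ↥Fj K :=
      Module.card_eq_pow_finrank
    rw [Nat.card_eq_fintype_card, h1, hrank, ← Nat.card_eq_fintype_card, hcardFj]
  -- finrank computations
  haveI : Module.Finite ↥Fj ↥V := Module.Finite.of_finite
  haveI : Fintype ↥V := Fintype.ofFinite _
  have hfinV : Module.finrank ↥Fj ↥V = ℓ := by
    have h1 : Fintype.card ↥V = Fintype.card ↥Fj ^ Module.finrank ↥Fj ↥V :=
      Module.card_eq_pow_finrank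
    rw [← Nat.card_eq_fintype_card, ← Nat.card_eq_fintype_card, hVc, hcardFj] at h1
    exact (Nat.pow_right_injective hq1 h1.symm)
  haveI : Module.Finite ↥Fsub K := Module.Finite.of_finite
  haveI : Fintype ↥Fsub := Fintype.ofFinite _
  have hfinFsub : Module.finrank ↥Fsub K = s := by
    have h1 : Fintype.card K = Fintype.card ↥Fsub ^ Module.finrank ↥Fsub K :=
      Module.card_eq_pow_finrank
    rw [← Nat.card_eq_fintype_card, ← Nat.card_eq_fintype_card, hcardK, hFsubc,
      ← pow_mul] at h1
    have h2 : s * ℓ = ℓ * Module.finrank ↥Fsub K :=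
      Nat.pow_right_injective hq1 h1
    exact (Nat.eq_of_mul_eq_mul_left hℓ0 (by rw [mul_comm ℓ s]; exact h2)).symm
  -- basis of K over Fsub
  let μ : Module.Basis (Fin s) ↥Fsub K := (Module.finBasis ↥Fsub K).reindex (finCongr hfinFsub)
  have hsmulFsub : ∀ (c : ↥Fsub) (x : K), c • x = (c : K) * x := fun c x => rfl
  -- independence of μ over Fsub with coefficients expressed in K
  have hμind : ∀ y : Fin s → K, (∀ t, y t ∈ Fsub) → (∑ t : Fin s, y t * μ t) = 0 →
      ∀ t, y t = 0 := by
    intro y hy h0 t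
    have h1 : (∑ t : Fin s, (⟨y t, hy t⟩ : ↥Fsub) • μ t) = 0 := by
      rw [← h0]
      exact Finset.sum_congr rfl fun t _ => by rw [hsmulFsub]
    have h2 := Fintype.linearIndependent_iff.mp μ.linearIndependent
      (fun t => (⟨y t, hy t⟩ : ↥Fsub)) h1 t
    exact congrArg Subtype.val h2
  -- the q^c-power ring homomorphisms
  let φ : ℕ → K →+* K := fun c =>
    { toFun := fun x => x ^ q ^ c
      map_one' := one_pow _
      map_mul' := fun x y => mul_pow x y _
      map_zero' := zero_pow (pow_ne_zero _ hq0)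
      map_add' := haddc c }
  -- Vandermonde-type injectivity
  have hvand : ∀ x : Fin s → K, (∀ e, x e ∈ V) →
      (∀ t : Fin s, ∑ e : Fin s, αj ^ (e : ℕ) * (x e) ^ q ^ (t : ℕ) = 0) →
      ∀ e, x e = 0 := by
    intro x hx hsys
    set β : Fin s → K := fun t => αj ^ q ^ (ℓ - (t : ℕ)) with hβ
    have hβe : ∀ (t : Fin s) (v : ℕ), (β t) ^ q ^ v = αj ^ q ^ (ℓ - (t : ℕ) + v) := by
      intro t v; rw [hβ]; exact hpowpow αj _ v
    have hkey : ∀ t t' : Fin s, (t : ℕ) < (t' : ℕ) → β t = β t' → False := by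
      intro t t' hlt h
      have ht'ℓ : (t' : ℕ) < ℓ := lt_trans t'.isLt hsℓ
      have e1 : (β t) ^ q ^ (t' : ℕ) = αj ^ q ^ (ℓ + ((t' : ℕ) - (t : ℕ))) := by
        rw [hβe]; congr 1; congr 1; omega
      have e2 : (β t') ^ q ^ (t' : ℕ) = αj := by
        rw [hβe]
        have : ℓ - (t' : ℕ) + (t' : ℕ) = ℓ := by omega
        rw [this, hαj]
      have e3 : αj ^ q ^ ((t' : ℕ) - (t : ℕ)) = αj := by
        have h4 : αj ^ q ^ (ℓ + ((t' : ℕ) - (t : ℕ))) = αj := by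
          rw [← e1, h, e2]
        have h5 : (αj ^ q ^ ℓ) ^ q ^ ((t' : ℕ) - (t : ℕ)) =
            αj ^ q ^ (ℓ + ((t' : ℕ) - (t : ℕ))) := hpowpow αj ℓ _
        rw [hαj] at h5
        rw [h5, h4]
      exact hαjny _ (by omega) (by omega) e3
    have hβinj : Function.Injective β := by
      intro t t' h
      by_contra hne
      have hvne : (t : ℕ) ≠ (t' : ℕ) := fun hh => hne (Fin.ext hh)
      rcases lt_or_gt_of_ne hvne with hh | hh
      · exact hkey t t' hh h
      · exact hkey t' t hh h.symm
    have hsys' : ∀ t : Fin s, ∑ e : Fin s, (β t) ^ (e : ℕ) * x e = 0 := by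
      intro t
      have h0 := congrArg (φ (ℓ - (t : ℕ))) (hsys t)
      rw [map_sum, map_zero] at h0
      rw [← h0]
      refine Finset.sum_congr rfl fun e _ => ?_
      show (β t) ^ (e : ℕ) * x e = (αj ^ (e : ℕ) * (x e) ^ q ^ (t : ℕ)) ^ q ^ (ℓ - (t : ℕ))
      rw [mul_pow]
      congr 1
      · rw [hβ]
        rw [← pow_mul, mul_comm, pow_mul]
      · have htℓ : (t : ℕ) + (ℓ - (t : ℕ)) = ℓ := by
          have := t.isLt; omega
        rw [hpowpow, htℓ]
        exact ((hmemV (x e)).mp (hx e)).symm ▸ rfl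
    have := Matrix.eq_zero_of_forall_index_sum_pow_mul_eq_zero hβinj hsys'
    intro e; exact congrFun this e
  -- the map Θ
  let Θ : K →ₗ[↥Fj] K :=
    { toFun := fun x => ∑ t : Fin s, (μ t) * x ^ q ^ (t : ℕ)
      map_add' := by
        intro x y
        rw [← Finset.sum_add_distrib]
        refine Finset.sum_congr rfl fun t _ => ?_
        rw [haddc, mul_add]
      map_smul' := by
        intro c x
        simp only [RingHom.id_apply]
        rw [Finset.smul_sum]
        refine Finset.sum_congr rfl fun t _ => ?_
        rw [hsmulFj, hsmulFj, mul_pow, hFfix (c : K) c.2, mul_left_comm] }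
  let ΘV : ↥V →ₗ[↥Fj] K := Θ.comp V.subtype
  have hΘVapp : ∀ z : ↥V, ΘV z = ∑ t : Fin s, (μ t) * (z : K) ^ q ^ (t : ℕ) := fun z => rfl
  have hΘVinj : Function.Injective ΘV := by
    rw [← LinearMap.ker_eq_bot]
    rw [LinearMap.ker_eq_bot']
    intro z hz
    rw [hΘVapp] at hz
    have h1 : ∀ t : Fin s, ((z : K) ^ q ^ (t : ℕ)) ∈ Fsub :=
      fun t => hpowmem (z : K) ((hmemV _).mp z.2) _
    have h2 : (∑ t : Fin s, ((z : K) ^ q ^ (t : ℕ)) * μ t) = 0 := by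
      rw [← hz]
      exact Finset.sum_congr rfl fun t _ => mul_comm _ _
    have h3 := hμind _ h1 h2 ⟨0, hs⟩
    simp only [pow_zero, pow_one] at h3
    exact Subtype.ext h3
  let Sj : Submodule ↥Fj K := LinearMap.range ΘV
  let eV : ↥V ≃ₗ[↥Fj] ↥Sj := LinearEquiv.ofInjective ΘV hΘVinj
  have hfinSj : Module.finrank ↥Fj ↥Sj = ℓ := by
    rw [← hfinV]; exact (LinearEquiv.finrank_eq eV).symm
  let b : Module.Basis (Fin ℓ) ↥Fj ↥Sj :=
    (((Module.finBasis ↥Fj ↥V).reindex (finCongr hfinV)).map eV)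
  -- the map Ψ
  let Ψ : (Fin s → ↥V) →ₗ[↥Fj] K :=
    { toFun := fun g => ∑ c : Fin s, ΘV (g c) * αj ^ (c : ℕ)
      map_add' := by
        intro g h
        rw [← Finset.sum_add_distrib]
        refine Finset.sum_congr rfl fun c _ => ?_
        rw [Pi.add_apply, map_add, add_mul]
      map_smul' := by
        intro c g
        simp only [RingHom.id_apply]
        rw [Finset.smul_sum]
        refine Finset.sum_congr rfl fun t _ => ?_
        rw [Pi.smul_apply, map_smul, smul_mul_assoc] }
  have hΨapp : ∀ g : Fin s → ↥V, Ψ g = ∑ c : Fin s, ΘV (g c) * αj ^ (c : ℕ) := fun g => rfl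
  have hΨinj : Function.Injective Ψ := by
    rw [← LinearMap.ker_eq_bot, LinearMap.ker_eq_bot']
    intro g hg
    rw [hΨapp] at hg
    set y : Fin s → K := fun t => ∑ c : Fin s, αj ^ (c : ℕ) * ((g c : K)) ^ q ^ (t : ℕ)
      with hy
    have hswap : (∑ c : Fin s, ΘV (g c) * αj ^ (c : ℕ)) = ∑ t : Fin s, y t * μ t := by
      simp only [hΘVapp, hy, Finset.sum_mul]
      rw [Finset.sum_comm]
      refine Finset.sum_congr rfl fun t _ => Finset.sum_congr rfl fun c _ => by ring
    have hymem : ∀ t, y t ∈ Fsub := by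
      intro t
      rw [hy]
      refine Subfield.sum_mem _ fun c _ => ?_
      exact Subfield.mul_mem _ (Subfield.pow_mem _ hαmem _)
        (hpowmem _ ((hmemV _).mp (g c).2) _)
    have hy0 : ∀ t, y t = 0 := hμind y hymem (by rw [← hswap, hg])
    have hgz := hvand (fun c => ((g c : K))) (fun c => (g c).2) (fun t => hy0 t)
    funext c
    exact Subtype.ext (hgz c)
  have hΨsurj : Function.Surjective Ψ := by
    have hdim : Module.finrank ↥Fj (Fin s → ↥V) = Module.finrank ↥Fj K := by
      rw [Module.finrank_pi_fintype, hrank]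
      simp [hfinV, Finset.sum_const, Finset.card_univ]
    exact (LinearMap.injective_iff_surjective_of_finrank_eq_finrank hdim).mp hΨinj
  refine ⟨Sj, b, hfinSj, ?_⟩
  intro x
  obtain ⟨g, hg⟩ := hΨsurj x
  refine ⟨fun c => ΘV (g c), fun c => LinearMap.mem_range_self _ _, ?_⟩
  rw [← hg, hΨapp]

end Core


theorem primeseq (s0 : ℕ) (hs : s0 ≠ 0) :
    ∃ g : ℕ → ℕ, StrictMono g ∧ (∀ i, Nat.Prime (g i)) ∧ (∀ i, g i ≡ 1 [MOD s0]) ∧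
      (∀ i, s0 < g i) := by
  have H : ∀ t : ℕ, ∃ p, Nat.Prime p ∧ t < p ∧ p ≡ 1 [MOD s0] := fun t =>
    Nat.exists_prime_gt_modEq_one t hs
  choose F hF1 hF2 hF3 using H
  let g : ℕ → ℕ := fun i => Nat.rec (F s0) (fun _ prev => F prev) i
  have hsucc : ∀ i, g (i + 1) = F (g i) := fun i => rfl
  have hg0 : g 0 = F s0 := rfl
  have hmono : StrictMono g :=
    strictMono_nat_of_lt_succ fun i => by rw [hsucc]; exact hF2 (g i)
  have hgt : ∀ i, s0 < g i := by
    intro i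
    induction i with
    | zero => rw [hg0]; exact hF2 s0
    | succ i ih => rw [hsucc]; exact lt_trans ih (hF2 (g i))
  refine ⟨g, hmono, ?_, ?_, hgt⟩
  · intro i
    cases i with
    | zero => exact hF1 s0
    | succ i => rw [hsucc]; exact hF1 _
  · intro i
    cases i with
    | zero => exact hF3 s0
    | succ i => rw [hsucc]; exact hF3 _

end RSAux

open RSAux

set_option maxHeartbeats 4000000
set_option synthInstance.maxHeartbeats 4000000

/-- Existence of Reed–Solomon codes meeting the cut-set bound for the repair of
any single node from any d helper nodes (Proposition 4.3 of the paper, after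
Tamo–Ye–Barg). -/
theorem RS_meeting_cut_set_bound_exists
    (n d k p : ℕ) (hk : 0 < k) (hkd : k < d) (hdn : d < n) (hp : IsPrimePow p) :
    ∃ ℓ : Fin n → ℕ,
      (∀ i, Nat.Prime (ℓ i)) ∧ Function.Injective ℓ ∧
      (∀ i, ℓ i ≡ 1 [MOD d - k + 1]) ∧
      ∃ (E : Type) (_ : Field E) (K : Type) (_ : Field K) (_ : Algebra E K)
        (_ : Finite K) (α : Fin n → K),
        -- E plays the role of F_p
        Nat.card E = p ∧
        -- the evaluation points are distinct and [E(α_i) : E] = ℓ_i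
        Function.Injective α ∧
        (∀ i, Module.finrank E (IntermediateField.adjoin E {α i}) = ℓ i) ∧
        -- K is an extension of F = E(α_1,…,α_n) of degree s = d - k + 1
        Module.finrank (IntermediateField.adjoin E (Set.range α)) K = d - k + 1 ∧
        ∀ j : Fin n,
          -- F_j = E(α_i : i ≠ j) and [K : F_j] = s·ℓ_j (whence the bandwidth
          -- d·ℓ_j·log|F_j| equals the cut-set bound d·log|K|/(d-k+1))
          Module.finrank (IntermediateField.adjoin E (α '' {i | i ≠ j})) K
              = (d - k + 1) * ℓ j ∧
          ∃ (Sj : Submodule (IntermediateField.adjoin E (α '' {i | i ≠ j})) K)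
            (b : Module.Basis (Fin (ℓ j)) (IntermediateField.adjoin E (α '' {i | i ≠ j})) Sj),
            -- dim_{F_j} S_j = ℓ_j
            Module.finrank (IntermediateField.adjoin E (α '' {i | i ≠ j})) Sj = ℓ j ∧
            -- S_j + S_j α_j + … + S_j α_j^{s-1} = K
            (∀ x : K, ∃ g : Fin (d - k + 1) → K,
              (∀ c, g c ∈ Sj) ∧ x = ∑ c : Fin (d - k + 1), g c * α j ^ (c : ℕ)) ∧
            -- the repair property from any d helper nodes
            ∀ S : Finset (Fin n), j ∉ S → S.card = d →
              ∀ f f' : Polynomial K,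
                f.degree < (k : WithBot ℕ) → f'.degree < (k : WithBot ℕ) →
                (∀ i ∈ S, ∀ m : Fin (ℓ j),
                  Algebra.trace (IntermediateField.adjoin E (α '' {i | i ≠ j})) K
                    ((b m : K) *
                      (∏ i' ∈ insert j S, if i' = i then 1 else (α i - α i')⁻¹) *
                      f.eval (α i)) =
                  Algebra.trace (IntermediateField.adjoin E (α '' {i | i ≠ j})) K
                    ((b m : K) *
                      (∏ i' ∈ insert j S, if i' = i then 1 else (α i - α i')⁻¹) *
                      f'.eval (α i))) →
                f.eval (α j) = f'.eval (α j) := by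
  classical
  obtain ⟨r, m, hrp, hm, hrm⟩ := hp
  have hr : Nat.Prime r := Nat.prime_iff.mpr hrp
  haveI : Fact (Nat.Prime r) := ⟨hr⟩
  have hr2 : 2 ≤ r := hr.two_le
  set s := d - k + 1 with hsdef
  have hs2 : 2 ≤ s := by omega
  have hs0 : 0 < s := by omega
  obtain ⟨g, hgmono, hgprime, hgmod, hggt⟩ := primeseq s (by omega)
  refine ⟨fun i => g i, fun i => hgprime i, fun i j h => Fin.ext (hgmono.injective h),
    fun i => hgmod i, ?_⟩
  set ℓ : Fin n → ℕ := fun i => g i with hℓdef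
  have hℓinj : Function.Injective ℓ := fun i j h => Fin.ext (hgmono.injective h)
  have hℓprime : ∀ i, Nat.Prime (ℓ i) := fun i => hgprime i
  have hℓgt : ∀ i, s < ℓ i := fun i => hggt i
  have hℓpos : ∀ i, 0 < ℓ i := fun i => (hℓprime i).pos
  set L : ℕ := ∏ i : Fin n, ℓ i with hLdef
  have hLpos : 0 < L := Finset.prod_pos fun i _ => hℓpos i
  have hdvdL : ∀ i, ℓ i ∣ L := fun i => Finset.dvd_prod_of_mem _ (Finset.mem_univ i)
  set N := m * (L * s) with hNdef
  have hN0 : N ≠ 0 := by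
    have : 0 < m * (L * s) := by positivity
    omega
  set K := GaloisField r N with hKdef
  haveI : Finite K := inferInstance
  haveI : Fintype K := Fintype.ofFinite _
  have hcardK : Fintype.card K = r ^ N := by
    rw [← Nat.card_eq_fintype_card]; exact GaloisField.card r N hN0
  have haddK : ∀ a : ℕ, ∀ x y : K, (x + y) ^ r ^ a = x ^ r ^ a + y ^ r ^ a := by
    intro a x y
    exact add_pow_char_pow x y r a
  set sub : ℕ → Subfield K :=
    (fun a => fixedSubfield K (r ^ a) (pow_ne_zero _ hr.pos.ne') (haddK a)) with hsubdef
  have hmemsub : ∀ (a : ℕ) (x : K), x ∈ sub a ↔ x ^ r ^ a = x := fun a x => Iff.rfl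
  have hcardsub : ∀ a, a ≠ 0 → a ∣ N → Nat.card ↥(sub a) = r ^ a := fun a ha hd =>
    card_fixed r ha hd hcardK
  have hsubmono : ∀ a b : ℕ, a ∣ b → ∀ x : K, x ∈ sub a → x ∈ sub b := by
    intro a b hab x hx
    obtain ⟨c, rfl⟩ := hab
    rw [hmemsub] at hx ⊢
    induction c with
    | zero => simp
    | succ c ih =>
      have : x ^ r ^ (a * (c + 1)) = (x ^ r ^ (a * c)) ^ r ^ a := by
        rw [← pow_mul, ← pow_add, mul_add, mul_one]
      rw [this, ih, hx]
  -- the base field E (made opaque for typeclass search performance)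
  obtain ⟨E, hcardE, hmemE⟩ : ∃ E : Subfield K, Nat.card ↥E = p ∧
      (∀ x : K, x ∈ E ↔ x ^ r ^ m = x) :=
    ⟨sub m, by rw [hcardsub m (by omega) ⟨L * s, rfl⟩, hrm], fun x => Iff.rfl⟩
  -- generators
  have hgen : ∀ a, a ≠ 0 → a ∣ N → ∃ x : K, x ∈ sub a ∧ x ≠ 0 ∧
      orderOf x = r ^ a - 1 ∧ (∀ y ∈ sub a, y ≠ 0 → ∃ c : ℕ, x ^ c = y) := by
    intro a ha hd
    obtain ⟨x, hx1, hx2, hx3, hx4⟩ := exists_gen (sub a)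
    rw [hcardsub a ha hd] at hx3
    exact ⟨x, hx1, hx2, hx3, hx4⟩
  have hdvdN : ∀ i, m * ℓ i ∣ N := fun i =>
    mul_dvd_mul_left m ((hdvdL i).trans (dvd_mul_right L s))
  have hmℓ0 : ∀ i, m * ℓ i ≠ 0 := fun i => by
    have := hℓpos i; have := hm; positivity
  choose α hα1 hα2 hα3 hα4 using fun i : Fin n => hgen (m * ℓ i) (hmℓ0 i) (hdvdN i)
  -- injectivity of α
  have hαinj : Function.Injective α := by
    intro i i' h
    have h1 : r ^ (m * ℓ i) - 1 = r ^ (m * ℓ i') - 1 := by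
      rw [← hα3 i, ← hα3 i', h]
    have h2 : r ^ (m * ℓ i) = r ^ (m * ℓ i') := by
      have hp1 : 1 ≤ r ^ (m * ℓ i) := Nat.one_le_pow _ _ hr.pos
      have hp2 : 1 ≤ r ^ (m * ℓ i') := Nat.one_le_pow _ _ hr.pos
      omega
    have h3 : m * ℓ i = m * ℓ i' := Nat.pow_right_injective hr2 h2
    have h4 : ℓ i = ℓ i' := by
      have := hm
      exact Nat.eq_of_mul_eq_mul_left hm h3
    exact hℓinj h4
  -- cardinalities of intermediate fields over E
  haveI : Fintype ↥E := Fintype.ofFinite _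
  have hcardIF : ∀ T : IntermediateField ↥E K,
      Nat.card ↥T = r ^ (m * Module.finrank ↥E ↥T) := by
    intro T
    haveI : Fintype ↥T := Fintype.ofFinite _
    haveI : Module.Finite ↥E ↥T := Module.Finite.of_finite
    have h1 : Fintype.card ↥T = Fintype.card ↥E ^ Module.finrank ↥E ↥T :=
      Module.card_eq_pow_finrank
    rw [Nat.card_eq_fintype_card, h1, ← Nat.card_eq_fintype_card, hcardE, ← hrm, ← pow_mul]
  have hIFfix : ∀ (T : IntermediateField ↥E K) (y : K), y ∈ T →
      y ^ r ^ (m * Module.finrank ↥E ↥T) = y := by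
    intro T y hy
    haveI : Fintype ↥T := Fintype.ofFinite _
    have h1 : (⟨y, hy⟩ : ↥T) ^ Fintype.card ↥T = ⟨y, hy⟩ := FiniteField.pow_card _
    have h2 : Fintype.card ↥T = r ^ (m * Module.finrank ↥E ↥T) := by
      rw [← Nat.card_eq_fintype_card, hcardIF T]
    rw [h2] at h1
    have h3 := congrArg Subtype.val h1
    simpa using h3
  -- finrank positivity
  have hfrpos : ∀ T : IntermediateField ↥E K, 0 < Module.finrank ↥E ↥T := by
    intro T
    haveI : Module.Finite ↥E ↥T := Module.Finite.of_finite
    exact Module.finrank_pos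
  -- divisibility of degrees from below
  have hdegdvd : ∀ (T : IntermediateField ↥E K) (i : Fin n), α i ∈ T →
      ℓ i ∣ Module.finrank ↥E ↥T := by
    intro T i hi
    have hfix := hIFfix T _ hi
    have h1 : m * ℓ i ∣ m * Module.finrank ↥E ↥T :=
      dvd_of_fixed hr2 (Nat.pos_of_ne_zero (hmℓ0 i)) (hα2 i) (hα3 i) hfix
    exact (mul_dvd_mul_iff_left hm.ne').mp h1
  -- divisibility of degrees from above
  have hTdvd : ∀ (T : IntermediateField ↥E K) (a : ℕ),
      (∀ x ∈ T, x ∈ sub (m * a)) → Module.finrank ↥E ↥T ∣ a := by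
    intro T a hsubT
    obtain ⟨γ, hγ1, hγ2, hγ3, _⟩ := exists_gen T.toSubfield
    have hγT : γ ∈ T := hγ1
    have hcc : Nat.card ↥T.toSubfield = Nat.card ↥T := rfl
    rw [hcc, hcardIF T] at hγ3
    have hfix : γ ^ r ^ (m * a) = γ := hsubT γ hγT
    have h1 : m * Module.finrank ↥E ↥T ∣ m * a := by
      refine dvd_of_fixed hr2 ?_ hγ2 hγ3 hfix
      have := hfrpos T; have := hm; positivity
    exact (mul_dvd_mul_iff_left hm.ne').mp h1
  -- adjoin is inside fixed subfields
  have hadjsub : ∀ (Tset : Set K) (a : ℕ), (∀ x ∈ Tset, x ∈ sub (m * a)) →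
      ∀ x ∈ IntermediateField.adjoin ↥E Tset, x ∈ sub (m * a) := by
    intro Tset a hT x hx
    have h1 : (IntermediateField.adjoin ↥E Tset).toSubfield ≤ sub (m * a) := by
      rw [IntermediateField.adjoin_toSubfield]
      refine Subfield.closure_le.mpr (Set.union_subset ?_ ?_)
      · rintro z ⟨e, rfl⟩
        have he : (algebraMap ↥E K) e = (e : K) := rfl
        rw [he]
        exact hsubmono m (m * a) (dvd_mul_right m a) _ ((hmemE _).mp e.2)
      · intro z hz; exact hT z hz
    exact h1 hx
  -- the full field F = E(α_1, ..., α_n)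
  set F : IntermediateField ↥E K := IntermediateField.adjoin ↥E (Set.range α) with hFdef
  have hFsub : ∀ x ∈ F, x ∈ sub (m * L) := by
    refine hadjsub _ L ?_
    rintro x ⟨i, rfl⟩
    exact hsubmono (m * ℓ i) (m * L) (mul_dvd_mul_left m (hdvdL i)) _ (hα1 i)
  have hLdvdrk : L ∣ Module.finrank ↥E ↥F := by
    have hdv : ∀ i : Fin n, ℓ i ∣ Module.finrank ↥E ↥F := fun i =>
      hdegdvd F i (IntermediateField.subset_adjoin _ _ (Set.mem_range_self i))
    have himg : L = ∏ q ∈ Finset.image ℓ Finset.univ, q := by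
      rw [hLdef, Finset.prod_image (fun i _ j _ h => hℓinj h)]
    rw [himg]
    refine Finset.prod_primes_dvd _ ?_ ?_
    · intro q hq
      obtain ⟨i, _, rfl⟩ := Finset.mem_image.mp hq
      exact (hℓprime i).prime
    · intro q hq
      obtain ⟨i, _, rfl⟩ := Finset.mem_image.mp hq
      exact hdv i
  have hrkF : Module.finrank ↥E ↥F = L :=
    Nat.dvd_antisymm (hTdvd F L hFsub) hLdvdrk
  -- [K : F] = s
  haveI : Module.Finite ↥F K := Module.Finite.of_finite
  haveI : Fintype ↥F := Fintype.ofFinite _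
  have hrkFK : Module.finrank ↥F K = s := by
    have h1 : Fintype.card K = Fintype.card ↥F ^ Module.finrank ↥F K :=
      Module.card_eq_pow_finrank
    rw [hcardK, ← Nat.card_eq_fintype_card (α := ↥F), hcardIF F, hrkF, ← pow_mul] at h1
    have h2 : N = m * L * Module.finrank ↥F K := Nat.pow_right_injective hr2 h1
    have h4 : m * (L * s) = m * (L * Module.finrank ↥F K) := by
      calc m * (L * s) = N := hNdef.symm
        _ = m * L * Module.finrank ↥F K := h2
        _ = m * (L * Module.finrank ↥F K) := by ring
    have h5 : L * s = L * Module.finrank ↥F K := Nat.eq_of_mul_eq_mul_left hm h4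
    exact (Nat.eq_of_mul_eq_mul_left hLpos h5).symm
  -- the per-index data
  refine ⟨↥E, inferInstance, K, inferInstance, inferInstance, inferInstance, α,
    hcardE, hαinj, ?_, hrkFK, ?_⟩
  · -- [E(α_i) : E] = ℓ i
    intro i
    set T := IntermediateField.adjoin ↥E {α i} with hTdef
    have hTsub : ∀ x ∈ T, x ∈ sub (m * ℓ i) := by
      refine hadjsub _ (ℓ i) ?_
      rintro x rfl
      exact hα1 i
    have h1 : ℓ i ∣ Module.finrank ↥E ↥T :=
      hdegdvd T i (IntermediateField.subset_adjoin _ _ rfl)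
    have h2 : Module.finrank ↥E ↥T ∣ ℓ i := hTdvd T (ℓ i) hTsub
    exact Nat.dvd_antisymm h2 h1
  · -- the per-j data
    intro j
    set Fj : IntermediateField ↥E K := IntermediateField.adjoin ↥E (α '' {i | i ≠ j})
      with hFjdef
    set Lj : ℕ := ∏ i ∈ Finset.univ.erase j, ℓ i with hLjdef
    have hLjL : L = ℓ j * Lj := by
      rw [hLdef, hLjdef, ← Finset.mul_prod_erase Finset.univ ℓ (Finset.mem_univ j)]
    have hLjpos : 0 < Lj := Finset.prod_pos fun i _ => hℓpos i
    have hdvdLj : ∀ i, i ≠ j → ℓ i ∣ Lj := fun i hi =>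
      Finset.dvd_prod_of_mem _ (Finset.mem_erase.mpr ⟨hi, Finset.mem_univ i⟩)
    have hFjsub : ∀ x ∈ Fj, x ∈ sub (m * Lj) := by
      refine hadjsub _ Lj ?_
      rintro x ⟨i, hi, rfl⟩
      exact hsubmono (m * ℓ i) (m * Lj) (mul_dvd_mul_left m (hdvdLj i hi)) _ (hα1 i)
    have hLjdvdrk : Lj ∣ Module.finrank ↥E ↥Fj := by
      have hdv : ∀ i : Fin n, i ≠ j → ℓ i ∣ Module.finrank ↥E ↥Fj := fun i hi =>
        hdegdvd Fj i (IntermediateField.subset_adjoin _ _ ⟨i, hi, rfl⟩)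
      have himg : Lj = ∏ q ∈ Finset.image ℓ (Finset.univ.erase j), q := by
        rw [hLjdef, Finset.prod_image (fun i _ j' _ h => hℓinj h)]
      rw [himg]
      refine Finset.prod_primes_dvd _ ?_ ?_
      · intro q hq
        obtain ⟨i, _, rfl⟩ := Finset.mem_image.mp hq
        exact (hℓprime i).prime
      · intro q hq
        obtain ⟨i, hi, rfl⟩ := Finset.mem_image.mp hq
        exact hdv i (Finset.mem_erase.mp hi).1
    have hrkFj : Module.finrank ↥E ↥Fj = Lj :=
      Nat.dvd_antisymm (hTdvd Fj Lj hFjsub) hLjdvdrk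
    have hcardFj : Nat.card ↥Fj = r ^ (m * Lj) := by rw [hcardIF Fj, hrkFj]
    -- set equality with the fixed subfield
    have hmLj0 : m * Lj ≠ 0 := by have := hm; positivity
    have hmLjdvdN : m * Lj ∣ N := by
      rw [hNdef, hLjL]
      exact mul_dvd_mul_left m (Dvd.dvd.mul_right (Dvd.intro_left (ℓ j) rfl) s)
    have hseteq : (Fj : Set K) = (sub (m * Lj) : Set K) := by
      have hsubset : (Fj : Set K) ⊆ (sub (m * Lj) : Set K) := fun x hx => hFjsub x hx
      refine Set.eq_of_subset_of_ncard_le hsubset ?_ (Set.toFinite _)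
      have hc1 : (Fj : Set K).ncard = r ^ (m * Lj) := by
        rw [← Nat.card_coe_set_eq]
        exact hcardFj
      have hc2 : ((sub (m * Lj) : Subfield K) : Set K).ncard = r ^ (m * Lj) := by
        rw [← Nat.card_coe_set_eq]
        exact hcardsub _ hmLj0 hmLjdvdN
      rw [hc1, hc2]
    have hFjq : ∀ x : K, x ∈ Fj ↔ x ^ r ^ (m * Lj) = x := by
      intro x
      rw [← hmemsub (m * Lj) x]
      constructor
      · intro hx
        have : x ∈ (Fj : Set K) := hx
        rw [hseteq] at this
        exact this
      · intro hx
        have : x ∈ ((sub (m * Lj) : Subfield K) : Set K) := hx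
        rw [← hseteq] at this
        exact this
    -- [K : F_j] = s * ℓ j
    haveI : Module.Finite ↥Fj K := Module.Finite.of_finite
    haveI : Fintype ↥Fj := Fintype.ofFinite _
    have hrkFjK : Module.finrank ↥Fj K = s * ℓ j := by
      have h1 : Fintype.card K = Fintype.card ↥Fj ^ Module.finrank ↥Fj K :=
        Module.card_eq_pow_finrank
      rw [hcardK, ← Nat.card_eq_fintype_card (α := ↥Fj), hcardFj, ← pow_mul] at h1
      have h2 : N = m * Lj * Module.finrank ↥Fj K := Nat.pow_right_injective hr2 h1
      have h4 : m * (Lj * (s * ℓ j)) = m * (Lj * Module.finrank ↥Fj K) := by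
        calc m * (Lj * (s * ℓ j)) = m * (L * s) := by rw [hLjL]; ring
          _ = N := hNdef.symm
          _ = m * Lj * Module.finrank ↥Fj K := h2
          _ = m * (Lj * Module.finrank ↥Fj K) := by ring
      have h5 : Lj * (s * ℓ j) = Lj * Module.finrank ↥Fj K :=
        Nat.eq_of_mul_eq_mul_left hm h4
      exact (Nat.eq_of_mul_eq_mul_left hLjpos h5).symm
    refine ⟨hrkFjK, ?_⟩
    -- apply the core construction
    set q : ℕ := r ^ (m * Lj) with hqdef
    have hq1 : 1 < q := Nat.one_lt_pow hmLj0 hr.one_lt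
    have hexp : q ^ ℓ j = r ^ (m * L) := by
      rw [hqdef, ← pow_mul, hLjL]; ring_nf
    have hqadd : ∀ x y : K, (x + y) ^ q = x ^ q + y ^ q := haddK (m * Lj)
    have hVcard : Nat.card {x : K // x ^ q ^ ℓ j = x} = q ^ ℓ j := by
      simp only [hexp]
      refine card_fixed r ?_ ?_ hcardK
      · have := hm; positivity
      · rw [hNdef]; exact mul_dvd_mul_left m (Dvd.dvd.mul_right dvd_rfl s)
    have hαjfix : α j ^ q ^ ℓ j = α j := by
      rw [hexp]
      exact hsubmono (m * ℓ j) (m * L) (mul_dvd_mul_left m (hdvdL j)) _ (hα1 j)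
    have hcop : Nat.Coprime (ℓ j) Lj := by
      rw [hLjdef]
      refine Nat.Coprime.prod_right fun i hi => ?_
      exact (Nat.coprime_primes (hℓprime j) (hℓprime i)).mpr
        (fun h => (Finset.mem_erase.mp hi).1 (hℓinj h.symm))
    have hαjny : ∀ v, 0 < v → v < ℓ j → α j ^ q ^ v ≠ α j := by
      intro v hv1 hv2 hfix
      have hqv : q ^ v = r ^ (m * Lj * v) := by rw [hqdef, ← pow_mul]
      rw [hqv] at hfix
      have h1 : m * ℓ j ∣ m * Lj * v :=
        dvd_of_fixed hr2 (Nat.pos_of_ne_zero (hmℓ0 j)) (hα2 j) (hα3 j) hfix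
      have h2 : ℓ j ∣ Lj * v := by
        have h3 : m * ℓ j ∣ m * (Lj * v) := by rwa [← mul_assoc]
        exact (mul_dvd_mul_iff_left hm.ne').mp h3
      have h4 : ℓ j ∣ v := hcop.dvd_of_dvd_mul_left h2
      have := Nat.le_of_dvd hv1 h4
      omega
    obtain ⟨Sj, b, hfinSj, hspan⟩ := core Fj q s (ℓ j) hq1 hs0 (hℓgt j) hqadd hFjq
      (by rw [hcardFj, hqdef]) hrkFjK hVcard (α j) hαjfix hαjny
    refine ⟨Sj, b, hfinSj, hspan, ?_⟩
    -- the repair property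
    intro S hjS hScard f f' hdf hdf' htr
    set Tr := Algebra.trace ↥Fj K with hTrdef
    set T' : Finset (Fin n) := insert j S with hT'def
    have hjT' : j ∈ T' := Finset.mem_insert_self j S
    have hcardT' : T'.card = d + 1 := by
      rw [hT'def, Finset.card_insert_of_notMem hjS, hScard]
    have hinj : Set.InjOn α ↑T' := fun a _ b _ h => hαinj h
    set w : Fin n → K := fun i => ∏ i' ∈ T', if i' = i then 1 else (α i - α i')⁻¹
      with hwdef
    have hwmatch : ∀ i ∈ T', w i = ∏ i' ∈ T'.erase i, (α i - α i')⁻¹ := by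
      intro i hi
      rw [hwdef]
      dsimp only
      rw [← Finset.mul_prod_erase T' _ hi, if_pos rfl, one_mul]
      exact Finset.prod_congr rfl fun i' hi' => if_neg (Finset.ne_of_mem_erase hi')
    set gp : Polynomial K := f - f' with hgpdef
    have hgdeg : gp.degree < (k : WithBot ℕ) :=
      lt_of_le_of_lt (Polynomial.degree_sub_le f f') (max_lt hdf hdf')
    have hdeg : ∀ t : Fin s,
        ((X : Polynomial K) ^ (t : ℕ) * gp).degree < ((T'.card - 1 : ℕ) : WithBot ℕ) := by
      intro t
      have h1 : ((X : Polynomial K) ^ (t : ℕ) * gp).degree =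
          ((t : ℕ) : WithBot ℕ) + gp.degree := by
        rw [Polynomial.degree_mul, Polynomial.degree_X_pow]
      rw [h1, hcardT']
      simp only [Nat.add_sub_cancel]
      calc ((t : ℕ) : WithBot ℕ) + gp.degree < ((t : ℕ) : WithBot ℕ) + (k : WithBot ℕ) :=
            WithBot.add_lt_add_left (by exact_mod_cast WithBot.coe_ne_bot) hgdeg
        _ = (((t : ℕ) + k : ℕ) : WithBot ℕ) := by push_cast; rfl
        _ ≤ ((d : ℕ) : WithBot ℕ) := by
            have ht := t.isLt
            have : (t : ℕ) + k ≤ d := by omega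
            exact_mod_cast this
    have hLag : ∀ t : Fin s,
        ∑ i ∈ T', w i * ((α i) ^ (t : ℕ) * gp.eval (α i)) = 0 := by
      intro t
      have hlv := lagrange_vanish T' α hinj ((X : Polynomial K) ^ (t : ℕ) * gp) (hdeg t)
      rw [← hlv]
      refine Finset.sum_congr rfl fun i hi => ?_
      rw [hwmatch i hi, Polynomial.eval_mul, Polynomial.eval_pow, Polynomial.eval_X]
    have htr0 : ∀ i ∈ S, ∀ m' : Fin (ℓ j), Tr ((b m' : K) * w i * gp.eval (α i)) = 0 := by
      intro i hiS m'
      have h1 : (b m' : K) * w i * gp.eval (α i) =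
          (b m' : K) * w i * f.eval (α i) - (b m' : K) * w i * f'.eval (α i) := by
        rw [hgpdef, Polynomial.eval_sub]; ring
      rw [h1, map_sub, htr i hiS m', sub_self]
    have hkey : ∀ (t : Fin s) (m' : Fin (ℓ j)),
        Tr ((b m' : K) * (w j * ((α j) ^ (t : ℕ) * gp.eval (α j)))) = 0 := by
      intro t m'
      have h2 := hLag t
      rw [hT'def, Finset.sum_insert hjS] at h2
      have h1 : w j * ((α j) ^ (t : ℕ) * gp.eval (α j)) =
          -∑ i ∈ S, w i * ((α i) ^ (t : ℕ) * gp.eval (α i)) :=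
        eq_neg_of_add_eq_zero_left h2
      rw [h1, mul_neg, map_neg, Finset.mul_sum, map_sum]
      have hterm : ∀ i ∈ S,
          Tr ((b m' : K) * (w i * ((α i) ^ (t : ℕ) * gp.eval (α i)))) = 0 := by
        intro i hiS
        have hij : i ≠ j := fun h => hjS (h ▸ hiS)
        have hiFj : α i ∈ Fj := IntermediateField.subset_adjoin _ _ ⟨i, hij, rfl⟩
        set c : ↥Fj := ⟨(α i) ^ (t : ℕ), pow_mem hiFj _⟩ with hcdef
        have heq : (b m' : K) * (w i * ((α i) ^ (t : ℕ) * gp.eval (α i))) =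
            c • ((b m' : K) * w i * gp.eval (α i)) := by
          show _ = (α i) ^ (t : ℕ) * ((b m' : K) * w i * gp.eval (α i))
          ring
        rw [heq, map_smul, htr0 i hiS m', smul_zero]
      rw [Finset.sum_eq_zero hterm, neg_zero]
    -- nondegeneracy of the trace form
    set y : K := w j * gp.eval (α j) with hydef
    have hyall : ∀ z : K, Tr (y * z) = 0 := by
      intro z
      obtain ⟨gz, hgz, rfl⟩ := hspan z
      rw [Finset.mul_sum, map_sum]
      refine Finset.sum_eq_zero fun c _ => ?_
      set zc : ↥Sj := ⟨gz c, hgz c⟩ with hzcdef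
      have hrepr : (zc : K) = ∑ m' : Fin (ℓ j), ((b.repr zc m' : K) * (b m' : K)) := by
        have h1 : zc = ∑ m', b.repr zc m' • b m' := (Module.Basis.sum_repr b zc).symm
        have h2 := congrArg (Subtype.val : ↥Sj → K) h1
        rw [h2]
        push_cast
        rfl
      have h3 : gz c = (zc : K) := rfl
      rw [h3, hrepr, Finset.sum_mul, Finset.mul_sum, map_sum]
      refine Finset.sum_eq_zero fun m' _ => ?_
      set cm : ↥Fj := b.repr zc m' with hcmdef
      have heq : y * ((cm : K) * (b m' : K) * α j ^ (c : ℕ)) =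
          cm • ((b m' : K) * (w j * ((α j) ^ (c : ℕ) * gp.eval (α j)))) := by
        show _ = (cm : K) * _
        rw [hydef]
        ring
      rw [heq, map_smul, hkey c m', smul_zero]
    haveI : FiniteDimensional ↥Fj K := Module.Finite.of_finite
    haveI : PerfectField ↥Fj := PerfectField.ofFinite
    haveI : Algebra.IsAlgebraic ↥Fj K := Algebra.IsAlgebraic.of_finite ↥Fj K
    haveI : Algebra.IsSeparable ↥Fj K := Algebra.IsAlgebraic.isSeparable_of_perfectField
    have hy0 : y = 0 := by
      refine (traceForm_nondegenerate ↥Fj K).1 y fun z => ?_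
      rw [Algebra.traceForm_apply]
      exact hyall z
    have hwj0 : w j ≠ 0 := by
      rw [hwdef]
      dsimp only
      refine Finset.prod_ne_zero_iff.mpr fun i' hi' => ?_
      by_cases h : i' = j
      · rw [if_pos h]; exact one_ne_zero
      · rw [if_neg h]
        refine inv_ne_zero (sub_ne_zero.mpr fun hc => h (hαinj hc).symm)
    have hgval : gp.eval (α j) = 0 := by
      rcases mul_eq_zero.mp hy0 with h | h
      · exact absurd h hwj0
      · exact h
    have := hgval
    rw [hgpdef, Polynomial.eval_sub, sub_eq_zero] at this
    exact this
end

section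
/- Let q be a prime power, let u, s, r be positive integers with u | (q−1), and let ℓ_1,…,ℓ_r be distinct primes with ℓ_i ≡ 1 (mod s) and ℓ_i > u for every i ∈ [r]. Choose α_i in an algebraic closure of F_q with [F_q(α_i) : F_q] = ℓ_i, and set F = F_q(α_1,…,α_r), F_i = F_q(α_j : j ≠ i), and let K be an extension of F with [K : F] = s. Then for every i ∈ [r] there exists an F_i-subspace S_i of K such that dim_{F_i} S_i = ℓ_i and S_i + S_i α_i^u + S_i α_i^{2u} + … + S_i α_i^{u(s−1)} = K, where + denotes the Minkowski sum of sets. -/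
open Polynomial Finset

set_option synthInstance.maxHeartbeats 400000
set_option maxHeartbeats 1600000
set_option linter.unusedVariables false
set_option linter.unusedSectionVars false
set_option linter.unnecessarySimpa false
set_option linter.unusedTactic false

theorem nat_dvd_of_pow_sub_one_dvd {q a b : ℕ} (hq : 2 ≤ q) (ha : 0 < a)
    (h : q ^ a - 1 ∣ q ^ b - 1) : a ∣ b := by
  induction b using Nat.strong_induction_on with
  | _ b ih =>
    have hqa : 2 ≤ q ^ a := by
      calc 2 = 2^1 := rfl
      _ ≤ q ^ a := Nat.pow_le_pow_left hq a |>.trans' (Nat.pow_le_pow_right (by omega) ha)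
    rcases Nat.lt_or_ge b a with hb | hb
    · have h1 : q ^ b - 1 < q ^ a - 1 := by
        have := Nat.pow_lt_pow_right (by omega : 1 < q) hb
        omega
      have h2 : q ^ b - 1 = 0 := by
        rcases h with ⟨c, hc⟩
        rcases Nat.eq_zero_or_pos c with rfl | hcpos
        · omega
        · have : q ^ a - 1 ≤ (q ^ a - 1) * c := Nat.le_mul_of_pos_right _ hcpos
          omega
      have : b = 0 := by
        by_contra hb0
        have : q ^ 1 ≤ q ^ b := Nat.pow_le_pow_right (by omega) (by omega)
        simp at this; omega
      simp [this]
    · have hba : q ^ (b-a) * q ^ a = q ^ b := by rw [← pow_add]; congr 1; omega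
      have h5 : 1 ≤ q ^ (b-a) := Nat.one_le_pow _ _ (by omega)
      have key : q ^ a - 1 ∣ q ^ (b - a) - 1 := by
        have h3 : q ^ b - 1 = (q ^ a - 1) * q ^ (b-a) + (q ^ (b-a) - 1) := by
          have hqb : 1 ≤ q ^ b := Nat.one_le_pow _ _ (by omega)
          zify [h5, hqb]
          have hba' : (q:ℤ) ^ (b-a) * (q:ℤ) ^ a = (q:ℤ) ^ b := by exact_mod_cast hba
          push_cast
          rw [Nat.cast_sub (by omega : 1 ≤ q ^ a), ← hba']
          push_cast
          ring
        rw [h3] at h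
        exact (Nat.dvd_add_right ⟨_, rfl⟩).mp h
      rcases Nat.eq_zero_or_pos (b - a) with h0 | hpos
      · have : b = a := by omega
        simp [this]
      · have := ih (b - a) (by omega) key
        have : a ∣ (b - a) + a := Nat.dvd_add this dvd_rfl
        simpa [Nat.sub_add_cancel hb] using this


section FFbase
variable {C K : Type} [Field C] [Field K] [Finite K] [Algebra C K]

lemma ffb_finiteC (C K : Type) [Field C] [Field K] [Finite K] [Algebra C K] : Finite C :=
  Finite.of_injective (algebraMap C K) (algebraMap C K).injective

lemma ffb_card_interfield (M : IntermediateField C K) :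
    Nat.card M = Nat.card C ^ Module.finrank C M := by
  have : Finite C := ffb_finiteC C K
  have : Fintype C := Fintype.ofFinite C
  have : Fintype M := Fintype.ofFinite M
  rw [Nat.card_eq_fintype_card, Nat.card_eq_fintype_card]
  exact Module.card_eq_pow_finrank

lemma ffb_pow_card_of_mem (M : IntermediateField C K) {x : K} (hx : x ∈ M) :
    x ^ (Nat.card C) ^ (Module.finrank C M) = x := by
  have : Fintype M := Fintype.ofFinite M
  have h := FiniteField.pow_card (⟨x, hx⟩ : M)
  rw [← Nat.card_eq_fintype_card, ffb_card_interfield] at h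
  have := congrArg (Subtype.val) h
  simpa using this

lemma ffb_pow_pow_of_dvd {x : K} {Q a b : ℕ} (h : x ^ Q ^ a = x) (hab : a ∣ b) :
    x ^ Q ^ b = x := by
  obtain ⟨k, rfl⟩ := hab
  induction k with
  | zero => simpa using h
  | succ n ih =>
      have : Q ^ (a * (n+1)) = Q ^ (a * n) * Q ^ a := by rw [← pow_add]; ring_nf
      rw [this, pow_mul, ih, h]

lemma ffb_exists_fixed (C K : Type) [Field C] [Field K] [Finite K] [Algebra C K]
    (n : ℕ) (hn : 0 < n) :
    ∃ M : IntermediateField C K, ∀ x : K, x ∈ M ↔ x ^ (Nat.card C) ^ n = x := by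
  have : Finite C := ffb_finiteC C K
  have : Fintype C := Fintype.ofFinite C
  set p := ringChar C with hpdef
  haveI hcp : CharP C p := ringChar.charP C
  have hp : p.Prime := CharP.char_is_prime C p
  haveI : Fact p.Prime := ⟨hp⟩
  haveI : CharP K p := charP_of_injective_algebraMap (algebraMap C K).injective p
  obtain ⟨k, -, hk⟩ := FiniteField.card C p
  have hQ : Nat.card C = p ^ (k : ℕ) := by rw [Nat.card_eq_fintype_card, hk]
  set f : K →+* K := iterateFrobenius K p ((k : ℕ) * n) with hfdef
  have hfx : ∀ x : K, f x = x ^ (Nat.card C) ^ n := by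
    intro x
    rw [hfdef, iterateFrobenius_def, hQ, ← pow_mul]
  have halg : ∀ c : C, f (algebraMap C K c) = algebraMap C K c := by
    intro c
    rw [hfx, ← map_pow]
    congr 1
    have : c ^ (Nat.card C) ^ n = c := by
      rw [Nat.card_eq_fintype_card]; exact FiniteField.pow_card_pow n c
    rw [this]
  let A : Subalgebra C K :=
  { carrier := {x | f x = x}
    mul_mem' := fun ha hb => by simp only [Set.mem_setOf_eq, map_mul] at *; rw [ha, hb]
    one_mem' := by simp [Set.mem_setOf_eq]
    add_mem' := fun ha hb => by simp only [Set.mem_setOf_eq, map_add] at *; rw [ha, hb]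
    zero_mem' := by simp [Set.mem_setOf_eq]
    algebraMap_mem' := halg }
  refine ⟨A.toIntermediateField (fun x hx => ?_), fun x => ?_⟩
  · show f x⁻¹ = x⁻¹
    rw [map_inv₀]
    exact congrArg Inv.inv hx
  · show f x = x ↔ _
    rw [hfx]

lemma ffb_finrank_dvd (C K : Type) [Field C] [Field K] [Finite K] [Algebra C K]
    (M : IntermediateField C K) (n : ℕ) (hn : 0 < n)
    (h : ∀ x : K, x ∈ M → x ^ (Nat.card C) ^ n = x) :
    Module.finrank C M ∣ n := by
  have : Finite C := ffb_finiteC C K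
  have : Fintype C := Fintype.ofFinite C
  have : Fintype M := Fintype.ofFinite M
  set Q := Nat.card C with hQdef
  have hQ2 : 2 ≤ Q := by
    rw [hQdef, Nat.card_eq_fintype_card]; exact Fintype.one_lt_card
  set d := Module.finrank C M with hddef
  have hd : 0 < d := Module.finrank_pos
  -- generator of Mˣ
  obtain ⟨g, hg⟩ := IsCyclic.exists_generator (α := Mˣ)
  have hog : orderOf g = Nat.card Mˣ := orderOf_eq_card_of_forall_mem_zpowers hg
  have hcardM : Nat.card M = Q ^ d := ffb_card_interfield M
  have hunits : Nat.card Mˣ = Q ^ d - 1 := by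
    rw [Nat.card_units, hcardM]
  set y : K := ((g : M) : K) with hydef
  have hy0 : y ≠ 0 := by
    simp only [hydef, ne_eq, ZeroMemClass.coe_eq_zero]
    exact Units.ne_zero g
  have horder : orderOf y = Q ^ d - 1 := by
    have h1 : orderOf ((g : M)) = orderOf g := orderOf_units
    have h2 : orderOf y = orderOf ((g : M)) :=
      orderOf_injective (algebraMap M K).toMonoidHom (algebraMap M K).injective _
    rw [h2, h1, hog, hunits]
  have hyn : y ^ (Q ^ n - 1) = 1 := by
    have hmem : y ∈ M := SetLike.coe_mem _
    have := h y hmem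
    have h1 : 1 ≤ Q ^ n := Nat.one_le_pow _ _ (by omega)
    have : y ^ (Q ^ n - 1) * y = 1 * y := by
      rw [one_mul, ← pow_succ]
      rw [Nat.sub_add_cancel h1]
      exact this
    exact mul_right_cancel₀ hy0 this
  have hdvd : Q ^ d - 1 ∣ Q ^ n - 1 := horder ▸ orderOf_dvd_of_pow_eq_one hyn
  exact nat_dvd_of_pow_sub_one_dvd hQ2 hd hdvd

lemma ffb_finrank_adjoin_dvd (C K : Type) [Field C] [Field K] [Finite K] [Algebra C K]
    (S : Set K) (n : ℕ) (hn : 0 < n)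
    (hS : ∀ x ∈ S, x ^ (Nat.card C) ^ n = x) :
    Module.finrank C (IntermediateField.adjoin C S) ∣ n := by
  obtain ⟨M, hM⟩ := ffb_exists_fixed C K n hn
  have hle : IntermediateField.adjoin C S ≤ M :=
    IntermediateField.adjoin_le_iff.mpr (fun x hx => (hM x).mpr (hS x hx))
  exact ffb_finrank_dvd C K _ n hn (fun x hx => (hM x).mp (hle hx))

lemma ffb_exists_frobenius (C K : Type) [Field C] [Field K] [Finite K] [Algebra C K] :
    ∃ ψ : ℕ → (K →+* K), (∀ j x, ψ j x = x ^ (Nat.card C) ^ j) ∧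
      (∀ j (a : C) (x : K), ψ j (a • x) = a • ψ j x) := by
  have : Finite C := Finite.of_injective (algebraMap C K) (algebraMap C K).injective
  have : Fintype C := Fintype.ofFinite C
  set p := ringChar C with hpdef
  haveI hcp : CharP C p := ringChar.charP C
  have hp : p.Prime := CharP.char_is_prime C p
  haveI : Fact p.Prime := ⟨hp⟩
  haveI : CharP K p := charP_of_injective_algebraMap (algebraMap C K).injective p
  obtain ⟨k, -, hk⟩ := FiniteField.card C p
  have hQ : Nat.card C = p ^ (k : ℕ) := by rw [Nat.card_eq_fintype_card, hk]
  refine ⟨fun j => iterateFrobenius K p ((k : ℕ) * j), fun j x => ?_, fun j a x => ?_⟩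
  · rw [iterateFrobenius_def, hQ, ← pow_mul]
  · have hval : ∀ y : K, iterateFrobenius K p ((k:ℕ)*j) y = y ^ (Nat.card C) ^ j := by
      intro y; rw [iterateFrobenius_def, hQ, ← pow_mul]
    rw [hval, hval, Algebra.smul_def, Algebra.smul_def, mul_pow, ← map_pow]
    congr 2
    rw [Nat.card_eq_fintype_card]
    exact FiniteField.pow_card_pow j a

theorem ffb_core (C K : Type) [Field C] [Field K] [Finite K] [Algebra C K]
    (ℓ s : ℕ) (hs : 0 < s) (hsl : s ≤ ℓ) (β : K)
    (hβ : Module.finrank C (IntermediateField.adjoin C {β}) = ℓ)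
    (hK : Module.finrank C K = ℓ * s) :
    ∃ S : Submodule C K, Module.finrank C S = ℓ ∧
      ∀ x : K, ∃ g : Fin s → K, (∀ c, g c ∈ S) ∧ x = ∑ c : Fin s, g c * β ^ (c : ℕ) := by
  classical
  have hCfin : Finite C := Finite.of_injective (algebraMap C K) (algebraMap C K).injective
  obtain ⟨ψ, hψ, hψs⟩ := ffb_exists_frobenius C K
  set Q := Nat.card C with hQdef
  set M := IntermediateField.adjoin C {β} with hMdef
  have hβM : β ∈ M := IntermediateField.subset_adjoin C {β} rfl
  have hl0 : 0 < ℓ := lt_of_lt_of_le hs hsl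
  -- finrank M K = s
  have htower : Module.finrank C M * Module.finrank M K = ℓ * s := by
    rw [Module.finrank_mul_finrank C M K, hK]
  have hMK : Module.finrank M K = s := by
    rw [hβ] at htower
    exact Nat.eq_of_mul_eq_mul_left hl0 htower
  -- basis of K over M
  let e : Module.Basis (Fin s) M K := (Module.finBasis M K).reindex (finCongr hMK)
  -- Frobenius as C-linear maps
  let fr : ℕ → (K →ₗ[C] K) := fun j =>
    { toFun := ψ j
      map_add' := fun a b => map_add (ψ j) a b
      map_smul' := fun a x => hψs j a x }
  have hfr : ∀ j x, fr j x = x ^ Q ^ j := fun j x => hψ j x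
  -- other C-linear maps
  let incl : M →ₗ[C] K := (IntermediateField.val M).toLinearMap
  let mulc : K → (K →ₗ[C] K) := fun a => LinearMap.mulLeft C a
  let σ : M →ₗ[C] K := ∑ c : Fin s, (mulc (e c)) ∘ₗ (fr (c : ℕ)) ∘ₗ incl
  have hσ : ∀ x : M, σ x = ∑ c : Fin s, e c * (x : K) ^ Q ^ (c : ℕ) := by
    intro x
    simp only [σ, LinearMap.sum_apply, LinearMap.comp_apply]
    refine Finset.sum_congr rfl (fun c _ => ?_)
    rw [hfr]
    rfl
  -- sigma is injective
  have hmem : ∀ (x : M) (c : Fin s), (x : K) ^ Q ^ (c : ℕ) ∈ M :=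
    fun x c => pow_mem x.2 _
  have hsmul : ∀ (m : M) (k : K), m • k = (m : K) * k := fun m k => rfl
  have hσinj : Function.Injective σ := by
    rw [injective_iff_map_eq_zero]
    intro x hx
    rw [hσ] at hx
    have hx' : ∑ c : Fin s, (⟨(x : K) ^ Q ^ (c : ℕ), hmem x c⟩ : M) • e c = 0 := by
      rw [← hx]
      exact Finset.sum_congr rfl (fun c _ => by rw [hsmul]; ring_nf)
    have hli := Fintype.linearIndependent_iff.mp e.linearIndependent
      (fun c => (⟨(x : K) ^ Q ^ (c : ℕ), hmem x c⟩ : M)) hx'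
    have h0 := hli ⟨0, hs⟩
    have : (x : K) ^ Q ^ (0 : ℕ) = 0 := congrArg Subtype.val h0
    rw [pow_zero, pow_one] at this
    exact Subtype.ext this
  -- the subspace
  refine ⟨LinearMap.range σ, ?_, ?_⟩
  · rw [LinearMap.finrank_range_of_inj hσinj, hβ]
  -- surjectivity of Θ
  intro x
  let Θ : (Fin s → M) →ₗ[C] K :=
    ∑ c' : Fin s, (mulc (β ^ (c' : ℕ))) ∘ₗ σ ∘ₗ (LinearMap.proj c')
  have hΘ : ∀ y : Fin s → M, Θ y = ∑ c' : Fin s, β ^ (c' : ℕ) * σ (y c') := by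
    intro y
    simp only [Θ, LinearMap.sum_apply, LinearMap.comp_apply, LinearMap.proj_apply]
    rfl
  have hΘinj : Function.Injective Θ := by
    rw [injective_iff_map_eq_zero]
    intro y hy
    rw [hΘ] at hy
    -- the coefficients, as elements of M
    have hcmem : ∀ c : Fin s, ∑ c' : Fin s, ((y c' : K) ^ Q ^ (c : ℕ)) * β ^ (c' : ℕ) ∈ M :=
      fun c => sum_mem (fun c' _ => mul_mem (hmem _ _) (pow_mem hβM _))
    have hy2 : ∑ c : Fin s, (⟨∑ c' : Fin s, ((y c' : K) ^ Q ^ (c : ℕ)) * β ^ (c' : ℕ),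
        hcmem c⟩ : M) • e c = 0 := by
      rw [← hy]
      calc ∑ c : Fin s, (⟨∑ c' : Fin s, ((y c' : K) ^ Q ^ (c : ℕ)) * β ^ (c' : ℕ),
            hcmem c⟩ : M) • e c
          = ∑ c : Fin s, ∑ c' : Fin s, β ^ (c' : ℕ) * (e c * (y c' : K) ^ Q ^ (c : ℕ)) := by
            refine Finset.sum_congr rfl (fun c _ => ?_)
            rw [hsmul]
            push_cast
            rw [Finset.sum_mul]
            exact Finset.sum_congr rfl (fun c' _ => by ring)
        _ = ∑ c' : Fin s, ∑ c : Fin s, β ^ (c' : ℕ) * (e c * (y c' : K) ^ Q ^ (c : ℕ)) :=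
            Finset.sum_comm
        _ = ∑ c' : Fin s, β ^ (c' : ℕ) * σ (y c') := by
            refine Finset.sum_congr rfl (fun c' _ => ?_)
            rw [hσ, Finset.mul_sum]
    have hli := Fintype.linearIndependent_iff.mp e.linearIndependent _ hy2
    have hcoef : ∀ c : Fin s, ∑ c' : Fin s, ((y c' : K) ^ Q ^ (c : ℕ)) * β ^ (c' : ℕ) = 0 :=
      fun c => congrArg Subtype.val (hli c)
    -- apply Frobenius to make Vandermonde system
    set v : Fin s → K := fun c => ψ (ℓ - (c : ℕ)) β with hvdef
    have hQpos : 0 < Q := Nat.card_pos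
    have key : ∀ c : Fin s, ∑ c' : Fin s, (v c) ^ (c' : ℕ) * (y c' : K) = 0 := by
      intro c
      have h0 := congrArg (ψ (ℓ - (c : ℕ))) (hcoef c)
      rw [map_sum, map_zero] at h0
      rw [← h0]
      refine Finset.sum_congr rfl (fun c' _ => ?_)
      rw [map_mul, map_pow, hψ, hψ, ← pow_mul, ← pow_add]
      have hcl : (ℓ - (c : ℕ)) + (c : ℕ) = ℓ := by
        have h1 : (c : ℕ) < s := c.2; omega
      rw [hcl]
      have hyfix : (y c' : K) ^ Q ^ ℓ = y c' := by
        have := ffb_pow_card_of_mem M (y c').2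
        rwa [hβ] at this
      have hvc : v c = β ^ Q ^ (ℓ - (c : ℕ)) := hψ _ _
      rw [hyfix, hvc]
      ring
    -- v is injective
    have hvinj : Function.Injective v := by
      have haux : ∀ c1 c2 : Fin s, (c1 : ℕ) < (c2 : ℕ) → v c1 ≠ v c2 := by
        intro c1 c2 hlt hv
        have hc2 : (c2 : ℕ) < s := c2.2
        have hβd : β ^ Q ^ ((c2 : ℕ) - (c1 : ℕ)) = β := by
          apply (ψ (ℓ - (c2 : ℕ))).injective
          rw [hψ, hψ, ← pow_mul, ← pow_add]
          have h1 : ((c2 : ℕ) - (c1 : ℕ)) + (ℓ - (c2 : ℕ)) = ℓ - (c1 : ℕ) := by omega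
          rw [h1, ← hψ, ← hψ]
          exact hv
        have hdvd := ffb_finrank_adjoin_dvd C K {β} ((c2 : ℕ) - (c1 : ℕ)) (by omega)
          (fun x hx => by rw [Set.mem_singleton_iff] at hx; rw [hx]; exact hβd)
        rw [← hMdef, hβ] at hdvd
        have := Nat.le_of_dvd (by omega) hdvd
        omega
      intro c1 c2 h
      rcases lt_trichotomy (c1 : ℕ) (c2 : ℕ) with h1 | h1 | h1
      · exact absurd h (haux c1 c2 h1)
      · exact Fin.ext h1
      · exact absurd h.symm (haux c2 c1 h1)
    -- Vandermonde
    have hdet : (Matrix.vandermonde v).det ≠ 0 :=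
      Matrix.det_vandermonde_ne_zero_iff.mpr hvinj
    have hmv : (Matrix.vandermonde v).mulVec (fun c' => (y c' : K)) = 0 := by
      funext c
      simp only [Matrix.mulVec, dotProduct, Matrix.vandermonde_apply, Pi.zero_apply]
      exact key c
    have hw : (fun c' => (y c' : K)) = 0 := by
      have hinj := Matrix.mulVec_injective_iff_isUnit.mpr
        ((Matrix.isUnit_iff_isUnit_det _).mpr (Ne.isUnit hdet))
      apply hinj
      rw [hmv, Matrix.mulVec_zero]
    funext c'
    exact Subtype.ext (congrFun hw c')
  -- Θ is surjective by dimension count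
  have hfrdom : Module.finrank C (Fin s → M) = ℓ * s := by
    rw [Module.finrank_pi_fintype C, Finset.sum_const, Finset.card_univ, Fintype.card_fin, hβ]
    rw [smul_eq_mul, mul_comm]
  have hrange : LinearMap.range Θ = ⊤ := by
    apply Submodule.eq_top_of_finrank_eq
    rw [LinearMap.finrank_range_of_inj hΘinj, hfrdom, hK]
  obtain ⟨y, hy⟩ := (LinearMap.range_eq_top.mp hrange) x
  refine ⟨fun c' => σ (y c'), fun c' => LinearMap.mem_range_self σ (y c'), ?_⟩
  rw [← hy, hΘ]
  exact Finset.sum_congr rfl (fun c' _ => mul_comm _ _)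

/-- Existence of the subspaces S_i used in Chen–Barg's rack-aware repair scheme
(Lemma 4.4 of the paper). -/
theorem chen_barg_subspace_lemma
    (q u s r : ℕ) (hq : IsPrimePow q) (hu : 0 < u) (hs : 0 < s) (hr : 0 < r)
    (hdvd : u ∣ q - 1)
    (ℓ : Fin r → ℕ) (hprime : ∀ i, Nat.Prime (ℓ i)) (hdist : Function.Injective ℓ)
    (hmod : ∀ i, ℓ i ≡ 1 [MOD s]) (hgt : ∀ i, u < ℓ i)
    (E K : Type) [Field E] [Field K] [Finite K] [Algebra E K]
    (hcard : Nat.card E = q)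
    (α : Fin r → K)
    -- [E(α_i) : E] = ℓ_i
    (hdeg : ∀ i, Module.finrank E (IntermediateField.adjoin E {α i}) = ℓ i)
    -- K is an extension of F = E(α_1,…,α_r) of degree s
    (hK : Module.finrank (IntermediateField.adjoin E (Set.range α)) K = s) :
    ∀ i : Fin r,
      ∃ Si : Submodule (IntermediateField.adjoin E (α '' {j | j ≠ i})) K,
        -- dim_{F_i} S_i = ℓ_i
        Module.finrank (IntermediateField.adjoin E (α '' {j | j ≠ i})) Si = ℓ i ∧
        -- S_i + S_i α_i^u + … + S_i α_i^{u(s-1)} = K (Minkowski sum)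
        ∀ x : K, ∃ g : Fin s → K,
          (∀ c, g c ∈ Si) ∧ x = ∑ c : Fin s, g c * α i ^ (u * (c : ℕ)) := by
  classical
  intro i
  set NE := Nat.card E with hNEdef
  set L : IntermediateField E K := IntermediateField.adjoin E (α '' {j | j ≠ i}) with hLdef
  set F : IntermediateField E K := IntermediateField.adjoin E (Set.range α) with hFdef
  set β : K := α i ^ u with hβdef
  -- numeric facts
  have hl2 : ∀ j, 2 ≤ ℓ j := fun j => (hprime j).two_le
  have hsl : s ≤ ℓ i := by
    have h1 : (1 : ℕ) ≤ ℓ i := by have := hl2 i; omega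
    have h2 : s ∣ ℓ i - 1 := (Nat.modEq_iff_dvd' h1).mp (hmod i).symm
    have h3 : 0 < ℓ i - 1 := by have := hl2 i; omega
    have := Nat.le_of_dvd h3 h2
    omega
  -- each α j has fixed-point property
  have hαmem : ∀ j, α j ∈ IntermediateField.adjoin E {α j} :=
    fun j => IntermediateField.subset_adjoin E {α j} rfl
  have hαfix : ∀ j, (α j) ^ NE ^ (ℓ j) = α j := by
    intro j
    have := ffb_pow_card_of_mem (IntermediateField.adjoin E {α j}) (hαmem j)
    rwa [hdeg j] at this
  -- the products
  set mi := ∏ j ∈ Finset.univ.erase i, ℓ j with hmidef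
  set m := ∏ j : Fin r, ℓ j with hmdef
  have hmipos : 0 < mi := Finset.prod_pos (fun j _ => (hprime j).pos)
  have hmpos : 0 < m := Finset.prod_pos (fun j _ => (hprime j).pos)
  have hmmi : m = ℓ i * mi := (Finset.mul_prod_erase Finset.univ ℓ (Finset.mem_univ i)).symm
  have hlimi : Nat.Coprime (ℓ i) mi := by
    apply Nat.Coprime.prod_right
    intro j hj
    have hne : ℓ i ≠ ℓ j := fun h =>
      (Finset.ne_of_mem_erase hj) (hdist h.symm)
    exact (Nat.coprime_primes (hprime i) (hprime j)).mpr hne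
  -- finrank E L = mi
  have hdLpos : 0 < Module.finrank E L := Module.finrank_pos
  have hdL1 : Module.finrank E L ∣ mi := by
    rw [hLdef]
    apply ffb_finrank_adjoin_dvd E K _ mi hmipos
    rintro x ⟨j, hj, rfl⟩
    exact ffb_pow_pow_of_dvd (hαfix j)
      (Finset.dvd_prod_of_mem ℓ (Finset.mem_erase.mpr ⟨hj, Finset.mem_univ j⟩))
  have hdL2 : mi ∣ Module.finrank E L := by
    -- each prime divides
    have hstep : ∀ j, j ≠ i → ℓ j ∣ Module.finrank E L := by
      intro j hj
      have hle : IntermediateField.adjoin E {α j} ≤ L := by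
        rw [hLdef]
        exact IntermediateField.adjoin.mono E _ _
          (Set.singleton_subset_iff.mpr ⟨j, hj, rfl⟩)
      have := ffb_finrank_dvd E K (IntermediateField.adjoin E {α j})
        (Module.finrank E L) hdLpos
        (fun x hx => ffb_pow_card_of_mem L (hle hx))
      rwa [hdeg j] at this
    rw [hmidef]
    rw [show (∏ j ∈ Finset.univ.erase i, ℓ j) = ∏ p ∈ (Finset.univ.erase i).image ℓ, p from
      (Finset.prod_image (g := ℓ) (f := fun p => p) (fun x _ y _ h => hdist h)).symm]
    apply Finset.prod_primes_dvd
    · intro p hp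
      obtain ⟨j, hj, rfl⟩ := Finset.mem_image.mp hp
      exact (hprime j).prime
    · intro p hp
      obtain ⟨j, hj, rfl⟩ := Finset.mem_image.mp hp
      exact hstep j (Finset.ne_of_mem_erase hj)
  have hdL : Module.finrank E L = mi := Nat.dvd_antisymm hdL1 hdL2
  -- finrank E F = m
  have hdFpos : 0 < Module.finrank E F := Module.finrank_pos
  have hdF1 : Module.finrank E F ∣ m := by
    rw [hFdef]
    apply ffb_finrank_adjoin_dvd E K _ m hmpos
    rintro x ⟨j, rfl⟩
    exact ffb_pow_pow_of_dvd (hαfix j) (Finset.dvd_prod_of_mem ℓ (Finset.mem_univ j))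
  have hdF2 : m ∣ Module.finrank E F := by
    have hstep : ∀ j, ℓ j ∣ Module.finrank E F := by
      intro j
      have hle : IntermediateField.adjoin E {α j} ≤ F := by
        rw [hFdef]
        exact IntermediateField.adjoin.mono E _ _
          (Set.singleton_subset_iff.mpr ⟨j, rfl⟩)
      have := ffb_finrank_dvd E K (IntermediateField.adjoin E {α j})
        (Module.finrank E F) hdFpos
        (fun x hx => ffb_pow_card_of_mem F (hle hx))
      rwa [hdeg j] at this
    rw [hmdef, show (∏ j : Fin r, ℓ j) = ∏ p ∈ Finset.univ.image ℓ, p from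
      (Finset.prod_image (g := ℓ) (f := fun p => p) (fun x _ y _ h => hdist h)).symm]
    apply Finset.prod_primes_dvd
    · intro p hp
      obtain ⟨j, hj, rfl⟩ := Finset.mem_image.mp hp
      exact (hprime j).prime
    · intro p hp
      obtain ⟨j, hj, rfl⟩ := Finset.mem_image.mp hp
      exact hstep j
  have hdF : Module.finrank E F = m := Nat.dvd_antisymm hdF1 hdF2
  -- finrank E K = m * s
  have hEK : Module.finrank E K = m * s := by
    rw [← Module.finrank_mul_finrank E F K, hdF, hK]
  -- finrank L K = ℓ i * s
  have hLK : Module.finrank L K = ℓ i * s := by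
    have h1 : Module.finrank E L * Module.finrank L K = m * s :=
      by rw [Module.finrank_mul_finrank E L K, hEK]
    rw [hdL] at h1
    rw [hmmi] at h1
    have : mi * Module.finrank L K = mi * (ℓ i * s) := by ring_nf; ring_nf at h1; omega
    exact Nat.eq_of_mul_eq_mul_left hmipos this
  -- β basic membership
  have hβmem : β ∈ IntermediateField.adjoin E {α i} := by
    rw [hβdef]; exact pow_mem (hαmem i) u
  have hβfix : β ^ NE ^ (ℓ i) = β := by
    have := ffb_pow_card_of_mem (IntermediateField.adjoin E {α i}) hβmem
    rwa [hdeg i] at this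
  -- finrank E (adjoin E {β}) = ℓ i
  have hEβ : Module.finrank E (IntermediateField.adjoin E {β}) = ℓ i := by
    have hdvd1 : Module.finrank E (IntermediateField.adjoin E {β}) ∣ ℓ i := by
      apply ffb_finrank_adjoin_dvd E K _ (ℓ i) (by omega)
      intro x hx
      rw [Set.mem_singleton_iff] at hx
      rw [hx]
      exact hβfix
    rcases (Nat.Prime.eq_one_or_self_of_dvd (hprime i) _ hdvd1) with h1 | h1
    · exfalso
      rw [IntermediateField.finrank_eq_one_iff] at h1
      have hbot : β ∈ (⊥ : IntermediateField E K) := by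
        rw [← h1]; exact IntermediateField.subset_adjoin E {β} rfl
      rw [IntermediateField.mem_bot] at hbot
      obtain ⟨c, hc⟩ := hbot
      -- minimal polynomial argument
      have hint : IsIntegral E (α i) := IsIntegral.of_finite E (α i)
      have hP : (aeval (α i)) (X ^ u - C c : E[X]) = 0 := by
        rw [map_sub, map_pow, aeval_X, aeval_C, hc, hβdef, sub_self]
      have hdvdP := minpoly.dvd E (α i) hP
      have hPne : (X ^ u - C c : E[X]) ≠ 0 := (monic_X_pow_sub_C c hu.ne').ne_zero
      have hdeg2 := Polynomial.natDegree_le_of_dvd hdvdP hPne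
      rw [natDegree_X_pow_sub_C] at hdeg2
      have hfr := IntermediateField.adjoin.finrank hint
      rw [hdeg i] at hfr
      have := hgt i
      omega
    · exact h1
  -- finrank L (adjoin L {β}) = ℓ i
  have hLβ : Module.finrank L (IntermediateField.adjoin L {β}) = ℓ i := by
    have hdvd1 : Module.finrank L (IntermediateField.adjoin L {β}) ∣ ℓ i := by
      apply ffb_finrank_adjoin_dvd L K _ (ℓ i) (by have := hl2 i; omega)
      intro x hx
      rw [Set.mem_singleton_iff] at hx
      rw [hx, ffb_card_interfield L, hdL, ← pow_mul NE mi (ℓ i)]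
      exact ffb_pow_pow_of_dvd hβfix (dvd_mul_left (ℓ i) mi)
    rcases (Nat.Prime.eq_one_or_self_of_dvd (hprime i) _ hdvd1) with h1 | h1
    · exfalso
      rw [IntermediateField.finrank_eq_one_iff] at h1
      have hbot : β ∈ (⊥ : IntermediateField L K) := by
        rw [← h1]; exact IntermediateField.subset_adjoin L {β} rfl
      rw [IntermediateField.mem_bot] at hbot
      obtain ⟨c, hc⟩ := hbot
      have hβL : β ∈ L := by rw [← hc]; exact c.2
      have hle : IntermediateField.adjoin E {β} ≤ L :=
        IntermediateField.adjoin_le_iff.mpr (Set.singleton_subset_iff.mpr hβL)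
      have hdvd2 := ffb_finrank_dvd E K (IntermediateField.adjoin E {β})
        (Module.finrank E L) hdLpos
        (fun x hx => ffb_pow_card_of_mem L (hle hx))
      rw [hEβ, hdL] at hdvd2
      have h1 : ℓ i ∣ 1 := hlimi ▸ Nat.dvd_gcd dvd_rfl hdvd2
      have := Nat.le_of_dvd Nat.one_pos h1
      have := hl2 i
      omega
    · exact h1
  -- apply the core construction
  obtain ⟨S, hS1, hS2⟩ := ffb_core L K (ℓ i) s hs hsl β hLβ hLK
  refine ⟨S, hS1, fun x => ?_⟩
  obtain ⟨g, hg, hx⟩ := hS2 x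
  refine ⟨g, hg, ?_⟩
  rw [hx]
  exact Finset.sum_congr rfl (fun c _ => by rw [hβdef, ← pow_mul])
end FFbase
end
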